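/- arXiv:2506.16547 — 10 statements merged into one kernel-verified Lean document; each statement's English description precedes it below -/
import Mathlib

section
/- The set { t ∈ [0, 2bπ) : X′(t) = 0 and Y′(t) = 0 } of cusp parameters of the one-circle envelope is finite with exactly |a − b| elements. -/
open Real

/-- cos x = -1 iff x is an odd multiple of π. -/
lemma cos_eq_neg_one_iff' (x : ℝ) : Real.cos x = -1 ↔ ∃ k : ℤ, x = (2 * k + 1) * π := by
  constructor
  · intro h
    have h1 : Real.cos (x + π) = 1 := by rw [Real.cos_add_pi, h]; ring
    obtain ⟨n, hn⟩ := (Real.cos_eq_one_iff _).1 h1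
    exact ⟨n - 1, by push_cast; linarith⟩
  · rintro ⟨k, rfl⟩
    have : (2 * (k : ℝ) + 1) * π = (k : ℝ) * (2 * π) + π := by ring
    rw [this, Real.cos_int_mul_two_pi_add_pi]

set_option maxHeartbeats 1000000 in
/-- The set of cusp parameters of the one-circle envelope in `[0, 2bπ)` is finite
with exactly `|a - b|` elements. -/
theorem one_circle_cusp_count
    (a b : ℤ) (hb : 0 < b) (hab : Int.gcd a b = 1)
    (m : ℝ) (hm : m = (a : ℝ) / (b : ℝ))
    (hm1 : m ≠ -1) (hm0 : m ≠ 0) (hm2 : m ≠ 1)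
    (X Y : ℝ → ℝ)
    (hX : ∀ t, X t = (m * Real.cos t + Real.cos (m * t)) / (m + 1))
    (hY : ∀ t, Y t = (m * Real.sin t + Real.sin (m * t)) / (m + 1)) :
    ({t : ℝ | t ∈ Set.Ico (0 : ℝ) (2 * (b : ℝ) * π) ∧
        deriv X t = 0 ∧ deriv Y t = 0}).Finite ∧
    ({t : ℝ | t ∈ Set.Ico (0 : ℝ) (2 * (b : ℝ) * π) ∧
        deriv X t = 0 ∧ deriv Y t = 0}).ncard = (a - b).natAbs := by
  have hbR : (0 : ℝ) < (b : ℝ) := by exact_mod_cast hb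
  have hbne : (b : ℝ) ≠ 0 := ne_of_gt hbR
  have hπ : 0 < π := Real.pi_pos
  have hπb : 0 < π * (b : ℝ) := mul_pos hπ hbR
  have hm1' : m + 1 ≠ 0 := fun h => hm1 (by linarith)
  have hab' : a ≠ b := by
    intro h
    exact hm2 (by rw [hm, h, div_self hbne])
  have hdne : ((a : ℝ) - (b : ℝ)) ≠ 0 := by
    intro h
    exact hab' (by exact_mod_cast show (a : ℝ) = (b : ℝ) by linarith)
  have hmd : m - 1 = ((a : ℝ) - b) / b := by rw [hm]; field_simp
  -- derivatives
  have hXfun : X = fun t => (m * Real.cos t + Real.cos (m * t)) / (m + 1) := funext hX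
  have hYfun : Y = fun t => (m * Real.sin t + Real.sin (m * t)) / (m + 1) := funext hY
  have hlin : ∀ t : ℝ, HasDerivAt (fun t : ℝ => m * t) m t := by
    intro t; simpa using (hasDerivAt_id t).const_mul m
  have hdX : ∀ t, deriv X t = (m * (-Real.sin t) + -Real.sin (m * t) * m) / (m + 1) := by
    intro t
    rw [hXfun]
    exact ((((Real.hasDerivAt_cos t).const_mul m).add
      ((Real.hasDerivAt_cos (m * t)).comp t (hlin t))).div_const (m + 1)).deriv
  have hdY : ∀ t, deriv Y t = (m * Real.cos t + Real.cos (m * t) * m) / (m + 1) := by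
    intro t
    rw [hYfun]
    exact ((((Real.hasDerivAt_sin t).const_mul m).add
      ((Real.hasDerivAt_sin (m * t)).comp t (hlin t))).div_const (m + 1)).deriv
  -- cusp condition
  have hcusp : ∀ t, (deriv X t = 0 ∧ deriv Y t = 0) ↔
      ∃ k : ℤ, (m - 1) * t = (2 * k + 1) * π := by
    intro t
    have e1 : m * (-Real.sin t) + -Real.sin (m * t) * m
        = -m * (Real.sin t + Real.sin (m * t)) := by ring
    have e2 : m * Real.cos t + Real.cos (m * t) * m
        = m * (Real.cos t + Real.cos (m * t)) := by ring
    rw [hdX t, hdY t, div_eq_zero_iff, div_eq_zero_iff, e1, e2]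
    simp only [hm1', or_false, mul_eq_zero, neg_eq_zero, hm0, false_or]
    rw [← cos_eq_neg_one_iff' ((m - 1) * t)]
    have h3 : (m - 1) * t = m * t - t := by ring
    rw [h3, Real.cos_sub]
    have h1 := Real.sin_sq_add_cos_sq t
    have h2 := Real.sin_sq_add_cos_sq (m * t)
    constructor
    · rintro ⟨hs, hc⟩; nlinarith
    · intro h
      constructor <;>
        nlinarith [sq_nonneg (Real.sin t + Real.sin (m * t)),
          sq_nonneg (Real.cos t + Real.cos (m * t))]
  -- the parametrization of cusps
  set e : ℤ → ℝ := fun k => (2 * (k : ℝ) + 1) * π * b / ((a : ℝ) - b) with he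
  have heinj : Function.Injective e := by
    intro k k' h
    simp only [he] at h
    rw [div_eq_div_iff hdne hdne] at h
    have h2 : (2 * (k : ℝ) + 1) * (π * b * ((a : ℝ) - b))
        = (2 * (k' : ℝ) + 1) * (π * b * ((a : ℝ) - b)) := by linear_combination h
    have h3 := mul_right_cancel₀ (mul_ne_zero (ne_of_gt hπb) hdne) h2
    have : (k : ℝ) = k' := by linarith
    exact_mod_cast this
  -- equation equivalence
  have heq : ∀ (t : ℝ) (k : ℤ), (m - 1) * t = (2 * k + 1) * π ↔ t = e k := by
    intro t k
    have hek : e k = (2 * (k : ℝ) + 1) * π * b / ((a : ℝ) - b) := rfl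
    rw [hek, hmd, div_mul_eq_mul_div, div_eq_iff hbne, eq_div_iff hdne]
    constructor <;> intro h <;> linear_combination h
  -- set equality
  set S := {t : ℝ | t ∈ Set.Ico (0 : ℝ) (2 * (b : ℝ) * π) ∧
      deriv X t = 0 ∧ deriv Y t = 0} with hSdef
  have hS : S = e '' ↑(Finset.Ico (min (a - b) 0) (max (a - b) 0)) := by
    ext t
    simp only [hSdef, Set.mem_setOf_eq, Set.mem_Ico, Set.mem_image, Finset.coe_Ico,
      Set.mem_Ico]
    constructor
    · rintro ⟨⟨ht0, ht2⟩, hD⟩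
      obtain ⟨k, hk⟩ := (hcusp t).1 hD
      have htk : t = e k := (heq t k).1 hk
      refine ⟨k, ⟨?_, ?_⟩, htk.symm⟩
      · -- min (a-b) 0 ≤ k
        rcases lt_or_gt_of_ne hab' with hlt | hgt
        · -- a < b : from t < 2bπ get 2(a-b) < 2k+1, i.e. a - b ≤ k
          have hdR : ((a : ℝ) - b) < 0 := by
            have : (a : ℝ) < b := by exact_mod_cast hlt
            linarith
          rw [htk] at ht2
          rw [he, div_lt_iff_of_neg hdR] at ht2
          have hkr : 2 * ((a : ℝ) - b) < 2 * (k : ℝ) + 1 := by nlinarith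
          have hki : 2 * (a - b) < 2 * k + 1 := by exact_mod_cast hkr
          omega
        · -- a > b : from 0 ≤ t get 0 ≤ 2k+1, i.e. 0 ≤ k
          have hdR : (0 : ℝ) < (a : ℝ) - b := by
            have : (b : ℝ) < a := by exact_mod_cast hgt
            linarith
          rw [htk] at ht0
          rw [he, le_div_iff₀ hdR] at ht0
          have hkr : (0 : ℝ) ≤ 2 * (k : ℝ) + 1 := by nlinarith
          have hki : (0 : ℤ) ≤ 2 * k + 1 := by exact_mod_cast hkr
          omega
      · -- k < max (a-b) 0
        rcases lt_or_gt_of_ne hab' with hlt | hgt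
        · -- a < b : from 0 ≤ t get 2k+1 ≤ 0, i.e. k < 0
          have hdR : ((a : ℝ) - b) < 0 := by
            have : (a : ℝ) < b := by exact_mod_cast hlt
            linarith
          rw [htk] at ht0
          rw [he, le_div_iff_of_neg hdR] at ht0
          have hkr : 2 * (k : ℝ) + 1 ≤ 0 := by nlinarith
          have hki : 2 * k + 1 ≤ (0 : ℤ) := by exact_mod_cast hkr
          omega
        · -- a > b : from t < 2bπ get 2k+1 < 2(a-b), i.e. k < a - b
          have hdR : (0 : ℝ) < (a : ℝ) - b := by
            have : (b : ℝ) < a := by exact_mod_cast hgt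
            linarith
          rw [htk] at ht2
          rw [he, div_lt_iff₀ hdR] at ht2
          have hkr : 2 * (k : ℝ) + 1 < 2 * ((a : ℝ) - b) := by nlinarith
          have hki : 2 * k + 1 < 2 * (a - b) := by exact_mod_cast hkr
          omega
    · rintro ⟨k, ⟨hk1, hk2⟩, rfl⟩
      refine ⟨⟨?_, ?_⟩, (hcusp _).2 ⟨k, (heq _ k).2 rfl⟩⟩
      · rcases lt_or_gt_of_ne hab' with hlt | hgt
        · have hdR : ((a : ℝ) - b) < 0 := by
            have : (a : ℝ) < b := by exact_mod_cast hlt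
            linarith
          simp only [he]
          rw [le_div_iff_of_neg hdR]
          have hki : 2 * k + 1 ≤ (0 : ℤ) := by
            have : k < max (a - b) 0 := hk2
            omega
          have hkr : 2 * (k : ℝ) + 1 ≤ 0 := by exact_mod_cast hki
          nlinarith
        · have hdR : (0 : ℝ) < (a : ℝ) - b := by
            have : (b : ℝ) < a := by exact_mod_cast hgt
            linarith
          simp only [he]
          rw [le_div_iff₀ hdR]
          have hki : (0 : ℤ) ≤ 2 * k + 1 := by
            have : min (a - b) 0 ≤ k := hk1
            omega
          have hkr : (0 : ℝ) ≤ 2 * (k : ℝ) + 1 := by exact_mod_cast hki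
          nlinarith
      · rcases lt_or_gt_of_ne hab' with hlt | hgt
        · have hdR : ((a : ℝ) - b) < 0 := by
            have : (a : ℝ) < b := by exact_mod_cast hlt
            linarith
          simp only [he]
          rw [div_lt_iff_of_neg hdR]
          have hki : 2 * (a - b) < 2 * k + 1 := by
            have : min (a - b) 0 ≤ k := hk1
            omega
          have hkr : 2 * ((a : ℝ) - b) < 2 * (k : ℝ) + 1 := by exact_mod_cast hki
          nlinarith
        · have hdR : (0 : ℝ) < (a : ℝ) - b := by
            have : (b : ℝ) < a := by exact_mod_cast hgt
            linarith
          simp only [he]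
          rw [div_lt_iff₀ hdR]
          have hki : 2 * k + 1 < 2 * (a - b) := by
            have : k < max (a - b) 0 := hk2
            omega
          have hkr : 2 * (k : ℝ) + 1 < 2 * ((a : ℝ) - b) := by exact_mod_cast hki
          nlinarith
  constructor
  · rw [hS]
    exact (Finset.finite_toSet _).image e
  · rw [hS, Set.ncard_image_of_injective _ heinj, Set.ncard_coe_finset, Int.card_Ico]
    omega
end

section
/- The set { t ∈ [0, 2bπ) : cos((m−1)t) = 1 } is finite with exactly |a − b| elements, and for every such t the envelope point lies on the unit circle, in fact (X(t), Y(t)) = (cos t, sin t); these are the points of tangency of the one-circle envelope with the unit circle. -/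
open Real

/-- The set `{t ∈ [0, 2bπ) : cos((m-1)t) = 1}` is finite with exactly `|a - b|`
elements, and at every such `t` the envelope point is `(cos t, sin t)`, a point
of tangency of the envelope with the unit circle. -/
theorem one_circle_tangency_count
    (a b : ℤ) (hb : 0 < b) (hab : Int.gcd a b = 1)
    (m : ℝ) (hm : m = (a : ℝ) / (b : ℝ))
    (hm1 : m ≠ -1) (hm0 : m ≠ 0) (hm2 : m ≠ 1)
    (X Y : ℝ → ℝ)
    (hX : ∀ t, X t = (m * Real.cos t + Real.cos (m * t)) / (m + 1))
    (hY : ∀ t, Y t = (m * Real.sin t + Real.sin (m * t)) / (m + 1)) :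
    ({t : ℝ | t ∈ Set.Ico (0 : ℝ) (2 * (b : ℝ) * π) ∧
        Real.cos ((m - 1) * t) = 1}).Finite ∧
    ({t : ℝ | t ∈ Set.Ico (0 : ℝ) (2 * (b : ℝ) * π) ∧
        Real.cos ((m - 1) * t) = 1}).ncard = (a - b).natAbs ∧
    (∀ t ∈ {t : ℝ | t ∈ Set.Ico (0 : ℝ) (2 * (b : ℝ) * π) ∧
        Real.cos ((m - 1) * t) = 1},
      X t = Real.cos t ∧ Y t = Real.sin t) := by
  have hbR : (0 : ℝ) < (b : ℝ) := by exact_mod_cast hb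
  have hbR' : (b : ℝ) ≠ 0 := ne_of_gt hbR
  have hdZ : a - b ≠ 0 := by
    intro h
    apply hm2
    have : a = b := by omega
    rw [hm, this, div_self hbR']
  set d : ℤ := a - b with hd_def
  set n : ℕ := d.natAbs with hn_def
  have hn0 : 0 < n := Int.natAbs_pos.mpr hdZ
  have hnR : (0 : ℝ) < (n : ℝ) := by exact_mod_cast hn0
  -- ε = sign of d
  set ε : ℤ := if 0 < d then 1 else -1 with hε_def
  have hεd : (d : ℝ) = (ε : ℝ) * (n : ℝ) := by
    rcases lt_trichotomy d 0 with h | h | h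
    · have hnd : (n : ℤ) = -d := by simp only [hn_def]; omega
      have hε : ε = -1 := by simp [hε_def, not_lt.mpr (le_of_lt h)]
      have hndR : ((n : ℕ) : ℝ) = ((-d : ℤ) : ℝ) := by exact_mod_cast hnd
      push_cast at hndR
      rw [hε]; push_cast; linarith
    · exact absurd h hdZ
    · have hnd : (n : ℤ) = d := by simp only [hn_def]; omega
      have hε : ε = 1 := by simp [hε_def, h]
      have hndR : ((n : ℕ) : ℝ) = ((d : ℤ) : ℝ) := by exact_mod_cast hnd
      push_cast at hndR
      rw [hε]; push_cast; linarith
  have hεε : (ε : ℝ) * (ε : ℝ) = 1 := by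
    rcases le_or_gt d 0 with h | h
    · simp [hε_def, not_lt.mpr h]
    · simp [hε_def, h]
  -- e is the gap between tangency parameters
  set e : ℝ := 2 * π * (b : ℝ) / (n : ℝ) with he_def
  have he : 0 < e := by
    apply div_pos _ hnR
    positivity
  have hm1' : m - 1 = (d : ℝ) / (b : ℝ) := by
    rw [hm, hd_def]
    push_cast
    field_simp
  have hne : (n : ℝ) * e = 2 * (b : ℝ) * π := by
    rw [he_def]
    field_simp
  -- key characterization of the set
  have key : {t : ℝ | t ∈ Set.Ico (0 : ℝ) (2 * (b : ℝ) * π) ∧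
        Real.cos ((m - 1) * t) = 1} =
      ↑((Finset.range n).image (fun j : ℕ => (j : ℝ) * e)) := by
    ext t
    simp only [Set.mem_setOf_eq, Finset.coe_image, Finset.coe_range, Set.mem_image,
      Set.mem_Iio, Set.mem_Ico]
    constructor
    · rintro ⟨⟨ht0, ht1⟩, hcos⟩
      obtain ⟨k, hk⟩ := (Real.cos_eq_one_iff _).mp hcos
      rw [hm1'] at hk
      -- t = (ε*k) * e
      have htk : t = ((ε * k : ℤ) : ℝ) * e := by
        have h1 : (k : ℝ) * (2 * π) * (b : ℝ) = (d : ℝ) * t := by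
          field_simp at hk
          linarith [hk]
        have h3 : (ε : ℝ) * (d : ℝ) = (n : ℝ) := by rw [hεd]; nlinarith [hεε]
        have h2 : (n : ℝ) * t = (ε : ℝ) * ((k : ℝ) * (2 * π) * (b : ℝ)) := by
          linear_combination (-(ε : ℝ)) * h1 - t * h3
        push_cast
        rw [he_def, mul_div_assoc', eq_div_iff (ne_of_gt hnR)]
        linear_combination h2
      have hk0 : (0 : ℝ) ≤ ((ε * k : ℤ) : ℝ) := by
        by_contra hneg
        push_neg at hneg
        have : t < 0 := by rw [htk]; nlinarith
        linarith
      have hkn : ((ε * k : ℤ) : ℝ) < (n : ℝ) := by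
        by_contra hge
        push_neg at hge
        have : (n : ℝ) * e ≤ t := by rw [htk]; nlinarith
        linarith [hne ▸ this]
      have hk0' : 0 ≤ ε * k := by exact_mod_cast hk0
      have hkn' : ε * k < (n : ℤ) := by exact_mod_cast hkn
      refine ⟨(ε * k).toNat, ?_, ?_⟩
      · omega
      · rw [htk]; congr 1; exact_mod_cast Int.toNat_of_nonneg hk0'
    · rintro ⟨j, hj, rfl⟩
      have hjR : ((j : ℝ)) < (n : ℝ) := by exact_mod_cast hj
      refine ⟨⟨by positivity, ?_⟩, ?_⟩
      · rw [← hne]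
        exact mul_lt_mul_of_pos_right hjR he
      · have harg : (m - 1) * ((j : ℝ) * e) = ((ε * j : ℤ) : ℝ) * (2 * π) := by
          rw [hm1', he_def, hεd]
          push_cast
          field_simp
        rw [harg]
        exact Real.cos_int_mul_two_pi _
  have hinj : Function.Injective (fun j : ℕ => (j : ℝ) * e) := by
    intro x y hxy
    simp only at hxy
    have := mul_right_cancel₀ (ne_of_gt he) hxy
    exact_mod_cast this
  refine ⟨?_, ?_, ?_⟩
  · rw [key]; exact Finset.finite_toSet _
  · rw [key, Set.ncard_coe_finset, Finset.card_image_of_injective _ hinj,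
      Finset.card_range]
  · rintro t ⟨_, hcos⟩
    obtain ⟨k, hk⟩ := (Real.cos_eq_one_iff _).mp hcos
    have hmt : m * t = t + (k : ℝ) * (2 * π) := by
      have : (m - 1) * t = (k : ℝ) * (2 * π) := hk.symm
      linarith [this]
    have hm1ne : m + 1 ≠ 0 := fun h => hm1 (by linarith)
    constructor
    · rw [hX, hmt, Real.cos_add_int_mul_two_pi]
      field_simp
    · rw [hY, hmt, Real.sin_add_int_mul_two_pi]
      field_simp
end

section
/- Every cusp of the one-circle envelope is a simple cusp: for every real t with X′(t) = 0 and Y′(t) = 0 one has X″(t)·Y‴(t) − X‴(t)·Y″(t) ≠ 0. -/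
open Real

/-- Every cusp of the one-circle envelope is a simple cusp:
whenever `X'(t) = Y'(t) = 0` we have `X''(t)·Y'''(t) - X'''(t)·Y''(t) ≠ 0`. -/
theorem one_circle_cusps_are_simple
    (a b : ℤ) (hb : 0 < b) (hab : Int.gcd a b = 1)
    (m : ℝ) (hm : m = (a : ℝ) / (b : ℝ))
    (hm1 : m ≠ -1) (hm0 : m ≠ 0) (hm2 : m ≠ 1)
    (X Y : ℝ → ℝ)
    (hX : ∀ t, X t = (m * Real.cos t + Real.cos (m * t)) / (m + 1))
    (hY : ∀ t, Y t = (m * Real.sin t + Real.sin (m * t)) / (m + 1)) :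
    ∀ t : ℝ, deriv X t = 0 → deriv Y t = 0 →
      iteratedDeriv 2 X t * iteratedDeriv 3 Y t -
        iteratedDeriv 3 X t * iteratedDeriv 2 Y t ≠ 0 := by
  have hm1' : m + 1 ≠ 0 := by intro h; apply hm1; linarith
  have hXf : X = fun t => (m * Real.cos t + Real.cos (m * t)) / (m + 1) := funext hX
  have hYf : Y = fun t => (m * Real.sin t + Real.sin (m * t)) / (m + 1) := funext hY
  have Hc : ∀ t : ℝ, HasDerivAt (fun u : ℝ => m * u) m t := fun t => by
    simpa using (hasDerivAt_id t).const_mul m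
  have Hcos : ∀ t : ℝ, HasDerivAt (fun u => Real.cos (m * u)) (-(m * Real.sin (m * t))) t :=
    fun t => by simpa [mul_comm, Function.comp_def] using (Real.hasDerivAt_cos (m * t)).comp t (Hc t)
  have Hsin : ∀ t : ℝ, HasDerivAt (fun u => Real.sin (m * u)) (m * Real.cos (m * t)) t :=
    fun t => by simpa [mul_comm, Function.comp_def] using (Real.hasDerivAt_sin (m * t)).comp t (Hc t)
  -- first derivatives
  have dX1 : deriv X = fun t => (-(m * Real.sin t) - m * Real.sin (m * t)) / (m + 1) := by
    funext t
    rw [hXf]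
    have h : HasDerivAt (fun t => (m * Real.cos t + Real.cos (m * t)) / (m + 1))
        ((-(m * Real.sin t) - m * Real.sin (m * t)) / (m + 1)) t := by
      have := (((Real.hasDerivAt_cos t).const_mul m).add (Hcos t)).div_const (m + 1)
      exact this.congr_deriv (by ring)
    exact h.deriv
  have dY1 : deriv Y = fun t => ((m * Real.cos t) + m * Real.cos (m * t)) / (m + 1) := by
    funext t
    rw [hYf]
    have h : HasDerivAt (fun t => (m * Real.sin t + Real.sin (m * t)) / (m + 1))
        (((m * Real.cos t) + m * Real.cos (m * t)) / (m + 1)) t := by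
      have := (((Real.hasDerivAt_sin t).const_mul m).add (Hsin t)).div_const (m + 1)
      exact this.congr_deriv (by ring)
    exact h.deriv
  -- second derivatives
  have dX2 : deriv (deriv X) = fun t =>
      (-(m * Real.cos t) - m * m * Real.cos (m * t)) / (m + 1) := by
    rw [dX1]; funext t
    have h : HasDerivAt (fun t => (-(m * Real.sin t) - m * Real.sin (m * t)) / (m + 1))
        ((-(m * Real.cos t) - m * m * Real.cos (m * t)) / (m + 1)) t := by
      have := ((((Real.hasDerivAt_sin t).const_mul m).neg).sub
        ((Hsin t).const_mul m)).div_const (m + 1)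
      exact this.congr_deriv (by ring)
    exact h.deriv
  have dY2 : deriv (deriv Y) = fun t =>
      (-(m * Real.sin t) - m * m * Real.sin (m * t)) / (m + 1) := by
    rw [dY1]; funext t
    have h : HasDerivAt (fun t => ((m * Real.cos t) + m * Real.cos (m * t)) / (m + 1))
        ((-(m * Real.sin t) - m * m * Real.sin (m * t)) / (m + 1)) t := by
      have := (((Real.hasDerivAt_cos t).const_mul m).add
        ((Hcos t).const_mul m)).div_const (m + 1)
      exact this.congr_deriv (by ring)
    exact h.deriv
  -- third derivatives
  have dX3 : deriv (deriv (deriv X)) = fun t =>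
      ((m * Real.sin t) + m * m * m * Real.sin (m * t)) / (m + 1) := by
    rw [dX2]; funext t
    have h : HasDerivAt (fun t => (-(m * Real.cos t) - m * m * Real.cos (m * t)) / (m + 1))
        (((m * Real.sin t) + m * m * m * Real.sin (m * t)) / (m + 1)) t := by
      have := ((((Real.hasDerivAt_cos t).const_mul m).neg).sub
        ((Hcos t).const_mul (m * m))).div_const (m + 1)
      exact this.congr_deriv (by ring)
    exact h.deriv
  have dY3 : deriv (deriv (deriv Y)) = fun t =>
      (-(m * Real.cos t) - m * m * m * Real.cos (m * t)) / (m + 1) := by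
    rw [dY2]; funext t
    have h : HasDerivAt (fun t => (-(m * Real.sin t) - m * m * Real.sin (m * t)) / (m + 1))
        ((-(m * Real.cos t) - m * m * m * Real.cos (m * t)) / (m + 1)) t := by
      have := ((((Real.hasDerivAt_sin t).const_mul m).neg).sub
        ((Hsin t).const_mul (m * m))).div_const (m + 1)
      exact this.congr_deriv (by ring)
    exact h.deriv
  intro t hX' hY'
  -- cusp equations
  have heqs : Real.sin (m * t) = -Real.sin t := by
    rw [dX1] at hX'
    have h2 : m * (Real.sin t + Real.sin (m * t)) = 0 := by
      field_simp at hX'; linarith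
    have := mul_eq_zero.mp h2
    rcases this with h | h
    · exact absurd h hm0
    · linarith
  have heqc : Real.cos (m * t) = -Real.cos t := by
    rw [dY1] at hY'
    have h2 : m * (Real.cos t + Real.cos (m * t)) = 0 := by
      field_simp at hY'; linarith
    have := mul_eq_zero.mp h2
    rcases this with h | h
    · exact absurd h hm0
    · linarith
  have i2X : iteratedDeriv 2 X t = (-(m * Real.cos t) - m * m * Real.cos (m * t)) / (m + 1) := by
    rw [show (2 : ℕ) = 1 + 1 from rfl, iteratedDeriv_succ, iteratedDeriv_one, dX2]
  have i2Y : iteratedDeriv 2 Y t = (-(m * Real.sin t) - m * m * Real.sin (m * t)) / (m + 1) := by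
    rw [show (2 : ℕ) = 1 + 1 from rfl, iteratedDeriv_succ, iteratedDeriv_one, dY2]
  have i3X : iteratedDeriv 3 X t = ((m * Real.sin t) + m * m * m * Real.sin (m * t)) / (m + 1) := by
    rw [show (3 : ℕ) = 2 + 1 from rfl, iteratedDeriv_succ,
      show (2 : ℕ) = 1 + 1 from rfl, iteratedDeriv_succ, iteratedDeriv_one, dX3]
  have i3Y : iteratedDeriv 3 Y t = (-(m * Real.cos t) - m * m * m * Real.cos (m * t)) / (m + 1) := by
    rw [show (3 : ℕ) = 2 + 1 from rfl, iteratedDeriv_succ,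
      show (2 : ℕ) = 1 + 1 from rfl, iteratedDeriv_succ, iteratedDeriv_one, dY3]
  rw [i2X, i2Y, i3X, i3Y, heqs, heqc]
  have pyth := Real.sin_sq_add_cos_sq t
  have key : (-(m * Real.cos t) - m * m * -Real.cos t) / (m + 1) *
        ((-(m * Real.cos t) - m * m * m * -Real.cos t) / (m + 1)) -
      ((m * Real.sin t) + m * m * m * -Real.sin t) / (m + 1) *
        ((-(m * Real.sin t) - m * m * -Real.sin t) / (m + 1)) =
      m ^ 2 * (m - 1) ^ 2 / (m + 1) := by
    field_simp
    linear_combination (1 - m - m ^ 2 + m ^ 3) * pyth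
  rw [key]
  have hnum : m ^ 2 * (m - 1) ^ 2 ≠ 0 := by
    apply mul_ne_zero
    · exact pow_ne_zero _ hm0
    · apply pow_ne_zero; intro h; apply hm2; linarith
  exact div_ne_zero hnum hm1'
end

section
/- For every real t with D(t) ≠ 0, the point (X(t), Y(t)) of the two-circle envelope satisfies both F(t, X(t), Y(t)) = 0 and ∂F/∂t (t, X(t), Y(t)) = 0; that is, the stated parametrization solves the envelope equations of the two-circle family of lines. -/
open Real

/-- The stated parametrization `(X(t), Y(t))` of the two-circle envelope satisfies
both `F = 0` and `∂F/∂t = 0` at every `t` with `D(t) ≠ 0`. -/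
theorem two_circle_parametrization_solves_envelope_equations
    (m r : ℝ) (hm1 : m ≠ -1) (hm0 : m ≠ 0) (hm2 : m ≠ 1) (hr : 1 < r)
    (A B C D X Y : ℝ → ℝ)
    (hA : ∀ t, A t = r * Real.sin (m * t) - Real.sin t)
    (hB : ∀ t, B t = -(r * Real.cos (m * t) - Real.cos t))
    (hC : ∀ t, C t = -(r * Real.sin ((m - 1) * t)))
    (hD : ∀ t, D t = r * (m + 1) * Real.cos ((m - 1) * t) - (m * r ^ 2 + 1))
    (hX : ∀ t, X t = r * (Real.cos (m * t) * (r * Real.cos ((m - 1) * t) - 1) +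
        m * Real.cos t * (Real.cos ((m - 1) * t) - r)) / D t)
    (hY : ∀ t, Y t = r * (Real.sin (m * t) * (r * Real.cos ((m - 1) * t) - 1) +
        m * Real.sin t * (Real.cos ((m - 1) * t) - r)) / D t) :
    ∀ t : ℝ, D t ≠ 0 →
      (A t * X t + B t * Y t + C t = 0 ∧
       deriv A t * X t + deriv B t * Y t + deriv C t = 0) := by
  intro t hDt
  -- derivatives
  have hAfun : A = fun t => r * Real.sin (m * t) - Real.sin t := funext hA
  have hBfun : B = fun t => -(r * Real.cos (m * t) - Real.cos t) := funext hB
  have hCfun : C = fun t => -(r * Real.sin ((m - 1) * t)) := funext hC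
  have hmt : HasDerivAt (fun t : ℝ => m * t) m t := by
    simpa using (hasDerivAt_id t).const_mul m
  have hm1t : HasDerivAt (fun t : ℝ => (m - 1) * t) (m - 1) t := by
    simpa using (hasDerivAt_id t).const_mul (m - 1)
  have hsinmt : HasDerivAt (fun t : ℝ => Real.sin (m * t)) (Real.cos (m * t) * m) t :=
    (Real.hasDerivAt_sin (m * t)).comp t hmt
  have hcosmt : HasDerivAt (fun t : ℝ => Real.cos (m * t)) (-Real.sin (m * t) * m) t :=
    (Real.hasDerivAt_cos (m * t)).comp t hmt
  have hsinm1t : HasDerivAt (fun t : ℝ => Real.sin ((m - 1) * t))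
      (Real.cos ((m - 1) * t) * (m - 1)) t :=
    (Real.hasDerivAt_sin ((m - 1) * t)).comp t hm1t
  have hA' : deriv A t = m * r * Real.cos (m * t) - Real.cos t := by
    rw [hAfun]
    have := ((hsinmt.const_mul r).sub (Real.hasDerivAt_sin t)).deriv
    exact this.trans (by ring)
  have hB' : deriv B t = m * r * Real.sin (m * t) - Real.sin t := by
    rw [hBfun]
    have := (((hcosmt.const_mul r).sub (Real.hasDerivAt_cos t)).neg).deriv
    exact this.trans (by ring)
  have hC' : deriv C t = -(r * (m - 1) * Real.cos ((m - 1) * t)) := by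
    rw [hCfun]
    have := ((hsinm1t.const_mul r).neg).deriv
    exact this.trans (by ring)
  -- trig expansions
  have hP : Real.cos ((m - 1) * t) =
      Real.cos (m * t) * Real.cos t + Real.sin (m * t) * Real.sin t := by
    rw [show (m - 1) * t = m * t - t by ring, Real.cos_sub]
  have hQ : Real.sin ((m - 1) * t) =
      Real.sin (m * t) * Real.cos t - Real.cos (m * t) * Real.sin t := by
    rw [show (m - 1) * t = m * t - t by ring, Real.sin_sub]
  have h1 := Real.sin_sq_add_cos_sq t
  have h2 := Real.sin_sq_add_cos_sq (m * t)
  constructor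
  · rw [hA t, hB t, hC t, hX t, hY t]
    rw [hD t] at hDt ⊢
    rw [hP] at hDt ⊢
    rw [hQ]
    set d := r * (m + 1) * (Real.cos (m * t) * Real.cos t + Real.sin (m * t) * Real.sin t) - (m * r ^ 2 + 1) with hd
    field_simp
    rw [hd]
    ring
  · rw [hA', hB', hC', hX t, hY t]
    rw [hD t] at hDt ⊢
    rw [hP] at hDt ⊢
    set d := r * (m + 1) * (Real.cos (m * t) * Real.cos t + Real.sin (m * t) * Real.sin t) - (m * r ^ 2 + 1) with hd
    field_simp
    rw [hd]
    linear_combination (r * m * r * (r * (Real.cos (m*t) * Real.cos t + Real.sin (m*t) * Real.sin t) - 1)) * h2 - (r * m * ((Real.cos (m*t) * Real.cos t + Real.sin (m*t) * Real.sin t) - r)) * h1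
end

section
/- Let m be a real number with m ∉ {−1, 0, 1} and r > 1. Then |(m r² + 1) / (r(m+1))| ≤ 1 if and only if |m| < 1 and r ≤ 1/|m|. Consequently the two-circle envelope goes to infinity (its denominator D(t) = r(m+1)cos((m−1)t) − (m r² + 1) has a real zero in t) if and only if |m| < 1 and 1 < r ≤ 1/|m|. -/
open Real

/-- For `m ∉ {-1,0,1}` and `r > 1`: `|(mr² + 1)/(r(m+1))| ≤ 1` iff `|m| < 1` and
`r ≤ 1/|m|`; consequently the two-circle envelope goes to infinity (the
denominator `D` has a real zero) iff `|m| < 1` and `1 < r ≤ 1/|m|`. -/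
theorem two_circle_envelope_goes_to_infinity_iff
    (m r : ℝ) (hm1 : m ≠ -1) (hm0 : m ≠ 0) (hm2 : m ≠ 1) (hr : 1 < r)
    (D : ℝ → ℝ)
    (hD : ∀ t, D t = r * (m + 1) * Real.cos ((m - 1) * t) - (m * r ^ 2 + 1)) :
    (|(m * r ^ 2 + 1) / (r * (m + 1))| ≤ 1 ↔ (|m| < 1 ∧ r ≤ 1 / |m|)) ∧
    ((∃ t : ℝ, D t = 0) ↔ (|m| < 1 ∧ 1 < r ∧ r ≤ 1 / |m|)) := by
  have hr0 : (0:ℝ) < r := by linarith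
  have hm10 : m + 1 ≠ 0 := by intro h; apply hm1; linarith
  have hA : r * (m + 1) ≠ 0 := mul_ne_zero (ne_of_gt hr0) hm10
  have hAabs : 0 < |r * (m + 1)| := abs_pos.mpr hA
  have hmabs : 0 < |m| := abs_pos.mpr hm0
  have hm2r : m ^ 2 = |m| ^ 2 := (sq_abs m).symm
  have key : |(m * r ^ 2 + 1) / (r * (m + 1))| ≤ 1 ↔ (|m| < 1 ∧ r ≤ 1 / |m|) := by
    rw [abs_div, div_le_one hAabs, ← sq_le_sq]
    constructor
    · intro h
      have hr2 : 1 < r ^ 2 := by nlinarith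
      have hsq : m ^ 2 * r ^ 2 ≤ 1 := by nlinarith [h, hr2]
      have hm1' : |m| * r ≤ 1 := by
        have : (|m| * r) ^ 2 ≤ 1 ^ 2 := by rw [mul_pow, ← hm2r]; nlinarith
        exact le_of_sq_le_sq this one_pos.le
      have hmlt : |m| < 1 := by nlinarith
      refine ⟨hmlt, ?_⟩
      rw [le_div_iff₀ hmabs]; linarith [mul_comm r |m|]
    · rintro ⟨hmlt, hrle⟩
      have hm1' : |m| * r ≤ 1 := by
        rw [le_div_iff₀ hmabs] at hrle; linarith [mul_comm r |m|]
      have hsq : m ^ 2 * r ^ 2 ≤ 1 := by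
        have := mul_nonneg (abs_nonneg m) hr0.le
        nlinarith [hm1', hm2r]
      nlinarith [mul_nonneg (by nlinarith : (0:ℝ) ≤ r ^ 2 - 1) (by linarith : (0:ℝ) ≤ 1 - m ^ 2 * r ^ 2)]
  refine ⟨key, ?_⟩
  constructor
  · rintro ⟨t, ht⟩
    rw [hD t] at ht
    have hc : Real.cos ((m - 1) * t) = (m * r ^ 2 + 1) / (r * (m + 1)) := by
      field_simp; linarith
    have hle : |(m * r ^ 2 + 1) / (r * (m + 1))| ≤ 1 := by
      rw [← hc]; exact Real.abs_cos_le_one _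
    obtain ⟨h1, h2⟩ := key.mp hle
    exact ⟨h1, hr, h2⟩
  · rintro ⟨h1, _, h2⟩
    have hle := key.mpr ⟨h1, h2⟩
    have hle' := abs_le.mp hle
    set c := (m * r ^ 2 + 1) / (r * (m + 1)) with hcdef
    have hm1t : m - 1 ≠ 0 := sub_ne_zero.mpr hm2
    refine ⟨Real.arccos c / (m - 1), ?_⟩
    rw [hD]
    have : (m - 1) * (Real.arccos c / (m - 1)) = Real.arccos c := by
      field_simp
    rw [this, Real.cos_arccos hle'.1 hle'.2, hcdef]
    field_simp; ring
end

section
/- Suppose |m| < 1 (so a, b have |a| < b) and 1 < r ≤ 1/|m|. Then the set { t ∈ [0, 2bπ) : cos((m−1)t) = (m r² + 1)/(r(m+1)) } of parameter values at which the two-circle envelope goes to infinity is finite, with exactly 2|b − a| elements if r < 1/|m|, and exactly |b − a| elements if r = 1/|m|. -/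
open Real

lemma cos_one_finset (K : ℕ) :
    ∃ s : Finset ℝ, {u : ℝ | u ∈ Set.Ico 0 (2*(K:ℝ)*π) ∧ Real.cos u = 1} = ↑s ∧ s.card = K := by
  have hπ := Real.pi_pos
  refine ⟨(Finset.range K).image (fun n : ℕ => 2*(n:ℝ)*π), ?_, ?_⟩
  · ext u
    simp only [Set.mem_setOf_eq, Set.mem_Ico, Finset.coe_image, Set.mem_image, Finset.mem_coe,
      Finset.mem_range]
    constructor
    · rintro ⟨⟨h0, hL⟩, hc⟩
      obtain ⟨j, hj⟩ := (Real.cos_eq_one_iff u).1 hc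
      have hj0 : 0 ≤ j := by
        by_contra h
        push_neg at h
        have h' : (j:ℝ) < 0 := by exact_mod_cast h
        have := mul_neg_of_neg_of_pos h' (by linarith : (0:ℝ) < 2*π)
        linarith
      have hjK : j < (K:ℤ) := by
        by_contra h
        push_neg at h
        have h' : (K:ℝ) ≤ (j:ℝ) := by exact_mod_cast h
        have := mul_le_mul_of_nonneg_right h' (by linarith : (0:ℝ) ≤ 2*π)
        linarith
      refine ⟨j.toNat, by omega, ?_⟩
      have hcast : ((j.toNat : ℝ)) = (j:ℝ) := by exact_mod_cast Int.toNat_of_nonneg hj0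
      show 2*((j.toNat : ℕ):ℝ)*π = u
      rw [hcast]
      linarith [hj]
    · rintro ⟨n, hn, rfl⟩
      have hn1 : (n:ℝ) + 1 ≤ K := by exact_mod_cast hn
      have hmul := mul_le_mul_of_nonneg_right hn1 (le_of_lt hπ)
      refine ⟨⟨by positivity, by linarith⟩, ?_⟩
      rw [Real.cos_eq_one_iff]
      exact ⟨n, by push_cast; ring⟩
  · rw [Finset.card_image_of_injective _ ?_, Finset.card_range]
    intro x y hxy
    simp only at hxy
    have h2 : (x:ℝ) * π = (y:ℝ) * π := by linarith
    have h3 : (x:ℝ) = (y:ℝ) := mul_right_cancel₀ Real.pi_ne_zero h2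
    exact_mod_cast h3

lemma cos_neg_one_finset (K : ℕ) :
    ∃ s : Finset ℝ, {u : ℝ | u ∈ Set.Ico 0 (2*(K:ℝ)*π) ∧ Real.cos u = -1} = ↑s ∧ s.card = K := by
  have hπ := Real.pi_pos
  refine ⟨(Finset.range K).image (fun n : ℕ => π + 2*(n:ℝ)*π), ?_, ?_⟩
  · ext u
    simp only [Set.mem_setOf_eq, Set.mem_Ico, Finset.coe_image, Set.mem_image, Finset.mem_coe,
      Finset.mem_range]
    constructor
    · rintro ⟨⟨h0, hL⟩, hc⟩
      obtain ⟨j, hj⟩ := Real.cos_eq_neg_one_iff.1 hc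
      have hj0 : 0 ≤ j := by
        by_contra h
        push_neg at h
        have h' : (j:ℝ) ≤ -1 := by exact_mod_cast (by omega : j ≤ (-1:ℤ))
        have := mul_le_mul_of_nonneg_right h' (by linarith : (0:ℝ) ≤ 2*π)
        linarith
      have hjK : j < (K:ℤ) := by
        by_contra h
        push_neg at h
        have h' : (K:ℝ) ≤ (j:ℝ) := by exact_mod_cast h
        have := mul_le_mul_of_nonneg_right h' (by linarith : (0:ℝ) ≤ 2*π)
        linarith
      refine ⟨j.toNat, by omega, ?_⟩
      have hcast : ((j.toNat : ℝ)) = (j:ℝ) := by exact_mod_cast Int.toNat_of_nonneg hj0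
      show π + 2*((j.toNat : ℕ):ℝ)*π = u
      rw [hcast]
      linarith [hj]
    · rintro ⟨n, hn, rfl⟩
      have hn1 : (n:ℝ) + 1 ≤ K := by exact_mod_cast hn
      have hmul := mul_le_mul_of_nonneg_right hn1 (le_of_lt hπ)
      refine ⟨⟨by positivity, by linarith⟩, ?_⟩
      rw [Real.cos_eq_neg_one_iff]
      exact ⟨n, by push_cast; ring⟩
  · rw [Finset.card_image_of_injective _ ?_, Finset.card_range]
    intro x y hxy
    simp only at hxy
    have h2 : (x:ℝ) * π = (y:ℝ) * π := by linarith
    have h3 : (x:ℝ) = (y:ℝ) := mul_right_cancel₀ Real.pi_ne_zero h2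
    exact_mod_cast h3

lemma cos_gen_finset (K : ℕ) (θ : ℝ) (h0 : 0 < θ) (h1 : θ < π) :
    ∃ s : Finset ℝ, {u : ℝ | u ∈ Set.Ico 0 (2*(K:ℝ)*π) ∧ Real.cos u = Real.cos θ} = ↑s ∧
      s.card = 2*K := by
  have hπ := Real.pi_pos
  set f : ℕ → ℝ := fun n : ℕ => 2*(n:ℝ)*π + θ with hf
  set g : ℕ → ℝ := fun n : ℕ => 2*((n:ℝ)+1)*π - θ with hg
  have hfinj : Function.Injective f := by
    intro x y hxy
    simp only [hf] at hxy
    have h2 : (x:ℝ) * π = (y:ℝ) * π := by linarith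
    have h3 : (x:ℝ) = (y:ℝ) := mul_right_cancel₀ Real.pi_ne_zero h2
    exact_mod_cast h3
  have hginj : Function.Injective g := by
    intro x y hxy
    simp only [hg] at hxy
    have h2 : (x:ℝ) * π = (y:ℝ) * π := by linarith
    have h3 : (x:ℝ) = (y:ℝ) := mul_right_cancel₀ Real.pi_ne_zero h2
    exact_mod_cast h3
  refine ⟨(Finset.range K).image f ∪ (Finset.range K).image g, ?_, ?_⟩
  · ext u
    simp only [Set.mem_setOf_eq, Set.mem_Ico, Finset.coe_union, Set.mem_union, Finset.coe_image,
      Set.mem_image, Finset.mem_coe, Finset.mem_range]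
    constructor
    · rintro ⟨⟨hu0, huL⟩, hc⟩
      obtain ⟨j, hj | hj⟩ := Real.cos_eq_cos_iff.1 hc
      · -- θ = 2jπ + u, so u = θ - 2jπ
        left
        have hu : u = θ - 2*(j:ℝ)*π := by linarith
        have hj0 : j ≤ 0 := by
          by_contra h
          push_neg at h
          have h' : (1:ℝ) ≤ (j:ℝ) := by exact_mod_cast h
          have := mul_le_mul_of_nonneg_right h' (le_of_lt hπ)
          linarith
        have hjK : -j < (K:ℤ) := by
          by_contra h
          push_neg at h
          have h' : (K:ℝ) ≤ ((-j : ℤ):ℝ) := by exact_mod_cast h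
          push_cast at h'
          have := mul_le_mul_of_nonneg_right h' (le_of_lt hπ)
          linarith
        refine ⟨(-j).toNat, by omega, ?_⟩
        have hcast : (((-j).toNat : ℝ)) = -(j:ℝ) := by
          have : (((-j).toNat : ℤ) : ℝ) = ((-j : ℤ) : ℝ) := by
            exact_mod_cast congrArg (fun z : ℤ => (z:ℝ)) (Int.toNat_of_nonneg (by omega : (0:ℤ) ≤ -j))
          push_cast at this
          linarith
        show 2*(((-j).toNat : ℕ):ℝ)*π + θ = u
        rw [hcast]
        linarith [hu]
      · -- θ = 2jπ - u, so u = 2jπ - θ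
        right
        have hu : u = 2*(j:ℝ)*π - θ := by linarith
        have hj1 : 1 ≤ j := by
          by_contra h
          push_neg at h
          have h' : (j:ℝ) ≤ 0 := by exact_mod_cast (by omega : j ≤ 0)
          have := mul_le_mul_of_nonneg_right h' (le_of_lt hπ)
          linarith
        have hjK : j ≤ (K:ℤ) := by
          by_contra h
          push_neg at h
          have h' : (K:ℝ) + 1 ≤ (j:ℝ) := by exact_mod_cast h
          have := mul_le_mul_of_nonneg_right h' (le_of_lt hπ)
          linarith
        refine ⟨(j-1).toNat, by omega, ?_⟩
        have hcast : (((j-1).toNat : ℝ)) = (j:ℝ) - 1 := by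
          have : (((j-1).toNat : ℤ) : ℝ) = ((j - 1 : ℤ) : ℝ) := by
            exact_mod_cast congrArg (fun z : ℤ => (z:ℝ)) (Int.toNat_of_nonneg (by omega : (0:ℤ) ≤ j - 1))
          push_cast at this
          linarith
        show 2*((((j-1).toNat : ℕ):ℝ) + 1)*π - θ = u
        rw [hcast]
        linarith [hu]
    · rintro (⟨n, hn, rfl⟩ | ⟨n, hn, rfl⟩)
      · have hn1 : (n:ℝ) + 1 ≤ K := by exact_mod_cast hn
        have hmul := mul_le_mul_of_nonneg_right hn1 (le_of_lt hπ)
        have hnn : (0:ℝ) ≤ (n:ℝ) * π := by positivity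
        refine ⟨⟨by simp only [hf]; linarith, by simp only [hf]; linarith⟩, ?_⟩
        rw [Real.cos_eq_cos_iff]
        exact ⟨-(n:ℤ), Or.inl (by simp only [hf]; push_cast; ring)⟩
      · have hn1 : (n:ℝ) + 1 ≤ K := by exact_mod_cast hn
        have hmul := mul_le_mul_of_nonneg_right hn1 (le_of_lt hπ)
        have hnn : (0:ℝ) ≤ (n:ℝ) * π := by positivity
        refine ⟨⟨by simp only [hg]; linarith, by simp only [hg]; linarith⟩, ?_⟩
        rw [Real.cos_eq_cos_iff]
        exact ⟨(n:ℤ)+1, Or.inr (by simp only [hg]; push_cast; ring)⟩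
  · rw [Finset.card_union_of_disjoint, Finset.card_image_of_injective _ hfinj,
      Finset.card_image_of_injective _ hginj, Finset.card_range]
    · ring
    · rw [Finset.disjoint_left]
      rintro x hx hx'
      simp only [Finset.mem_image, Finset.mem_range] at hx hx'
      obtain ⟨n, _, rfl⟩ := hx
      obtain ⟨n', _, hne⟩ := hx'
      simp only [hf, hg] at hne
      set d : ℤ := (n':ℤ) + 1 - n with hd
      have hdπ : ((d:ℝ)) * π = θ := by push_cast [hd]; linarith
      have hdiv : ((d:ℝ)) = θ / π := by rw [eq_div_iff Real.pi_ne_zero]; exact hdπ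
      have h0d : (0:ℝ) < (d:ℝ) := by rw [hdiv]; exact div_pos h0 hπ
      have h1d : ((d:ℝ)) < 1 := by rw [hdiv]; exact (div_lt_one hπ).2 h1
      have hd0 : (0:ℤ) < d := by exact_mod_cast h0d
      have hd1 : d < 1 := by exact_mod_cast h1d
      omega

/-- If `|m| < 1` and `1 < r ≤ 1/|m|`, the set of parameter values in `[0, 2bπ)`
at which the two-circle envelope goes to infinity is finite, with `2|b - a|`
elements if `r < 1/|m|` and `|b - a|` elements if `r = 1/|m|`. -/
theorem two_circle_infinity_parameter_count
    (a b : ℤ) (hb : 0 < b) (hab : Int.gcd a b = 1)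
    (m r : ℝ) (hm : m = (a : ℝ) / (b : ℝ))
    (hm1 : m ≠ -1) (hm0 : m ≠ 0) (hm2 : m ≠ 1)
    (hr : 1 < r) (hmlt : |m| < 1) (hrle : r ≤ 1 / |m|)
    (T : Set ℝ)
    (hT : T = {t : ℝ | t ∈ Set.Ico (0 : ℝ) (2 * (b : ℝ) * π) ∧
        Real.cos ((m - 1) * t) = (m * r ^ 2 + 1) / (r * (m + 1))}) :
    T.Finite ∧
    (r < 1 / |m| → T.ncard = 2 * (b - a).natAbs) ∧
    (r = 1 / |m| → T.ncard = (b - a).natAbs) := by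
  have hπ := Real.pi_pos
  have hbR : (0:ℝ) < (b:ℝ) := by exact_mod_cast hb
  have hmabs : 0 < |m| := abs_pos.2 hm0
  have hm1' : -1 < m ∧ m < 1 := abs_lt.1 hmlt
  have hmden : 0 < r * (m + 1) := mul_pos (by linarith) (by linarith [hm1'.1])
  have habR : (a:ℝ) < b := by
    have := hm1'.2
    rw [hm, div_lt_one hbR] at this
    exact this
  have hab' : a < b := by exact_mod_cast habR
  have habR' : -(b:ℝ) < a := by
    have := hm1'.1
    rw [hm, lt_div_iff₀ hbR] at this
    linarith
  set K : ℕ := (b - a).toNat with hKdef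
  have hKabs : (b - a).natAbs = K := by omega
  have hKZ : ((K:ℤ)) = b - a := by omega
  have hKR : (K:ℝ) = (b:ℝ) - (a:ℝ) := by
    have : (((K:ℤ)):ℝ) = ((b - a : ℤ):ℝ) := by rw [hKZ]
    push_cast at this
    linarith
  have hKpos : 0 < K := by omega
  have hKRpos : (0:ℝ) < K := by exact_mod_cast hKpos
  set α : ℝ := (K:ℝ) / b with hα
  have hαpos : 0 < α := div_pos hKRpos hbR
  set c : ℝ := (m * r ^ 2 + 1) / (r * (m + 1)) with hc
  have hma : m - 1 = -α := by
    rw [hm, hα, hKR]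
    field_simp
    ring
  have hTeq : T = {t : ℝ | t ∈ Set.Ico (0 : ℝ) (2 * (b : ℝ) * π) ∧ Real.cos (α * t) = c} := by
    rw [hT]
    ext t
    simp only [Set.mem_setOf_eq]
    rw [hma, show -α * t = -(α * t) by ring, Real.cos_neg]
  set S : Set ℝ := {u : ℝ | u ∈ Set.Ico (0:ℝ) (2*(K:ℝ)*π) ∧ Real.cos u = c} with hS
  have hinj : Function.Injective (fun u : ℝ => u / α) := fun x y h => by
    field_simp [hαpos.ne'] at h; exact h
  have hscale : α * (2 * (b:ℝ) * π) = 2*(K:ℝ)*π := by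
    rw [hα]; field_simp
  have himg : T = (fun u : ℝ => u / α) '' S := by
    rw [hTeq]
    ext t
    simp only [Set.mem_image, Set.mem_setOf_eq, Set.mem_Ico, hS]
    constructor
    · rintro ⟨⟨ht0, htL⟩, hct⟩
      refine ⟨α * t, ⟨⟨by positivity, ?_⟩, hct⟩, by field_simp⟩
      calc α * t < α * (2 * (b:ℝ) * π) := (mul_lt_mul_iff_right₀ hαpos).2 htL
        _ = 2*(K:ℝ)*π := hscale
    · rintro ⟨u, ⟨⟨hu0, huL⟩, hcu⟩, rfl⟩
      have hαt : α * (u / α) = u := by field_simp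
      refine ⟨⟨by positivity, ?_⟩, by rw [hαt]; exact hcu⟩
      rw [div_lt_iff₀ hαpos]
      have h2 : (2 * (b:ℝ) * π) * α = 2*(K:ℝ)*π := by rw [mul_comm]; exact hscale
      linarith
  have hrabs : r * |m| ≤ 1 := (le_div_iff₀ hmabs).1 hrle
  have hmr1 : m * r ≤ 1 := by
    have := mul_le_mul_of_nonneg_right (le_abs_self m) (by linarith : (0:ℝ) ≤ r)
    linarith [abs_nonneg m]
  have hmr2 : -1 ≤ m * r := by
    have := mul_le_mul_of_nonneg_right (neg_abs_le m) (by linarith : (0:ℝ) ≤ r)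
    linarith [abs_nonneg m]
  rcases lt_or_eq_of_le hrle with hlt | heq
  · -- strict case: -1 < c < 1
    have hrabs' : r * |m| < 1 := (lt_div_iff₀ hmabs).1 hlt
    have hmr1' : m * r < 1 := by
      have := mul_le_mul_of_nonneg_right (le_abs_self m) (by linarith : (0:ℝ) ≤ r)
      linarith [abs_nonneg m]
    have hmr2' : -1 < m * r := by
      have := mul_le_mul_of_nonneg_right (neg_abs_le m) (by linarith : (0:ℝ) ≤ r)
      linarith [abs_nonneg m]
    have hclt : c < 1 := by
      rw [hc, div_lt_one hmden]
      linarith [mul_pos (by linarith : (0:ℝ) < r - 1) (by linarith : (0:ℝ) < 1 - m*r)]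
    have hcgt : -1 < c := by
      rw [hc, lt_div_iff₀ hmden]
      linarith [mul_pos (by linarith : (0:ℝ) < r + 1) (by linarith : (0:ℝ) < m*r + 1)]
    set θ := Real.arccos c with hθ
    have hθ0 : 0 < θ := Real.arccos_pos.2 hclt
    have hθπ : θ < π := lt_of_le_of_ne (Real.arccos_le_pi c)
      (fun h => absurd (Real.arccos_eq_pi.1 h) (by linarith))
    have hcosθ : Real.cos θ = c := Real.cos_arccos (by linarith) (by linarith)
    obtain ⟨s, hs, hcard⟩ := cos_gen_finset K θ hθ0 hθπ
    have hS' : S = ↑s := by rw [hS, ← hcosθ]; exact hs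
    have hfin : T.Finite := by rw [himg, hS']; exact s.finite_toSet.image _
    refine ⟨hfin, fun _ => ?_, fun h => absurd h (by linarith)⟩
    rw [himg, Set.ncard_image_of_injective _ hinj, hS', Set.ncard_coe_finset, hcard, hKabs]
  · -- equality case
    have habs1 : r * |m| = 1 := by
      rw [heq]; field_simp
    rcases lt_trichotomy m 0 with hneg | hzero | hpos
    · have habs : |m| = -m := abs_of_neg hneg
      have hmr : m * r = -1 := by rw [habs] at habs1; linarith
      have hmr2sq : m * r ^ 2 = -r := by
        calc m * r ^ 2 = (m * r) * r := by ring
          _ = -1 * r := by rw [hmr]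
          _ = -r := by ring
      have hceq : c = -1 := by
        rw [hc, div_eq_iff hmden.ne']
        linarith [hmr, hmr2sq]
      obtain ⟨s, hs, hcard⟩ := cos_neg_one_finset K
      have hS' : S = ↑s := by rw [hS, hceq]; exact hs
      have hfin : T.Finite := by rw [himg, hS']; exact s.finite_toSet.image _
      refine ⟨hfin, fun h => absurd heq (by linarith), fun _ => ?_⟩
      rw [himg, Set.ncard_image_of_injective _ hinj, hS', Set.ncard_coe_finset, hcard, hKabs]
    · exact absurd hzero hm0
    · have habs : |m| = m := abs_of_pos hpos
      have hmr : m * r = 1 := by rw [habs] at habs1; linarith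
      have hmr2sq : m * r ^ 2 = r := by
        calc m * r ^ 2 = (m * r) * r := by ring
          _ = 1 * r := by rw [hmr]
          _ = r := by ring
      have hceq : c = 1 := by
        rw [hc, div_eq_one_iff_eq hmden.ne']
        linarith [hmr, hmr2sq]
      obtain ⟨s, hs, hcard⟩ := cos_one_finset K
      have hS' : S = ↑s := by rw [hS, hceq]; exact hs
      have hfin : T.Finite := by rw [himg, hS']; exact s.finite_toSet.image _
      refine ⟨hfin, fun h => absurd heq (by linarith), fun _ => ?_⟩
      rw [himg, Set.ncard_image_of_injective _ hinj, hS', Set.ncard_coe_finset, hcard, hKabs]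
end

section
/- Let m be a real number with m ∉ {−1, 0, 1, 1/2} and r > 1, and set M = ((2m−1)r² + (2−m)) / (r(m+1)). Then |M| ≤ 1 if and only if |m| < 1 and r ≤ |(m−2)/(2m−1)|; moreover when r = |(m−2)/(2m−1)| one has M = 1 or M = −1 (so that any t with cos((m−1)t) = M satisfies sin((m−1)t) = 0). -/
open Real

/-- For `m ∉ {-1,0,1,1/2}` and `r > 1`, with `M = ((2m-1)r² + (2-m))/(r(m+1))`:
`|M| ≤ 1` iff `|m| < 1` and `r ≤ |(m-2)/(2m-1)|`; and at the extreme value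
`r = |(m-2)/(2m-1)|` one has `M = 1` or `M = -1`. -/
theorem two_circle_extra_cusp_condition
    (m r : ℝ) (hm1 : m ≠ -1) (hm0 : m ≠ 0) (hm2 : m ≠ 1) (hmh : m ≠ 1 / 2)
    (hr : 1 < r)
    (M : ℝ) (hM : M = ((2 * m - 1) * r ^ 2 + (2 - m)) / (r * (m + 1))) :
    (|M| ≤ 1 ↔ (|m| < 1 ∧ r ≤ |(m - 2) / (2 * m - 1)|)) ∧
    (r = |(m - 2) / (2 * m - 1)| → M = 1 ∨ M = -1) := by
  have hr0 : 0 < r := lt_trans one_pos hr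
  have hm1' : m + 1 ≠ 0 := fun h => hm1 (by linarith)
  have hD : r * (m + 1) ≠ 0 := mul_ne_zero (ne_of_gt hr0) hm1'
  have h2m : 2 * m - 1 ≠ 0 := fun h => hmh (by linarith)
  have key : (M ^ 2 - 1) * (r * (m + 1)) ^ 2
      = ((2 * m - 1) ^ 2 * r ^ 2 - (m - 2) ^ 2) * (r ^ 2 - 1) := by
    subst hM; field_simp; ring
  have hr2 : 0 < r ^ 2 - 1 := by nlinarith
  have hD2 : 0 < (r * (m + 1)) ^ 2 := by positivity
  have h2mabs : 0 < |2 * m - 1| := abs_pos.mpr h2m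
  have habs : |(m - 2) / (2 * m - 1)| = |m - 2| / |2 * m - 1| := abs_div _ _
  have hsq : (2 * m - 1) ^ 2 * r ^ 2 ≤ (m - 2) ^ 2 ↔ r ≤ |(m - 2) / (2 * m - 1)| := by
    rw [habs, le_div_iff₀ h2mabs]
    constructor
    · intro h
      nlinarith [sq_abs (m - 2), sq_abs (2 * m - 1), abs_nonneg (m - 2),
        abs_nonneg (2 * m - 1), mul_pos hr0 h2mabs]
    · intro h
      nlinarith [sq_abs (m - 2), sq_abs (2 * m - 1), abs_nonneg (m - 2),
        abs_nonneg (2 * m - 1), mul_pos hr0 h2mabs]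
  have hMsq : |M| ≤ 1 ↔ (2 * m - 1) ^ 2 * r ^ 2 ≤ (m - 2) ^ 2 := by
    rw [← sq_le_one_iff_abs_le_one]
    constructor
    · intro h; nlinarith
    · intro h; nlinarith
  constructor
  · rw [hMsq]
    constructor
    · intro h
      have h2mp : 0 < (2 * m - 1) ^ 2 := by positivity
      refine ⟨abs_lt.mpr ⟨by nlinarith, by nlinarith⟩, hsq.mp h⟩
    · rintro ⟨_, h⟩
      exact hsq.mpr h
  · intro heq
    have h1 : r * |2 * m - 1| = |m - 2| := by
      rw [heq, habs, div_mul_cancel₀ _ h2mabs.ne']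
    have h2 : (2 * m - 1) ^ 2 * r ^ 2 = (m - 2) ^ 2 := by
      have h1' := congrArg (fun x => x ^ 2) h1
      simp only [mul_pow, sq_abs] at h1'
      linarith
    have hM2 : M ^ 2 = 1 := by
      have := key
      rw [h2] at this
      simp at this
      nlinarith
    have : (M - 1) * (M + 1) = 0 := by linear_combination hM2
    rcases mul_eq_zero.mp this with h | h
    · left; linarith
    · right; linarith
end

section
/- Suppose |m| > 1 and r > 1. Then the set { t ∈ [0, 2bπ) : X′(t) = 0 and Y′(t) = 0 } of cusp parameters of the two-circle envelope is finite with exactly 2|a − b| elements. -/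
open Real

private lemma cuspAux1 (m r c1 s1 cm sm cu su : ℝ)
    (h1 : s1 ^ 2 + c1 ^ 2 = 1) (h2 : su ^ 2 + cu ^ 2 = 1)
    (h3 : cm = c1 * cu - s1 * su) (h4 : sm = s1 * cu + c1 * su) :
    c1 * ((r * (((cm * m) * (r * cu - 1) + sm * (r * (-su * (m - 1)))) +
            ((m * c1) * (cu - r) + (m * s1) * (-su * (m - 1))))) *
          (r * (m + 1) * cu - (m * r ^ 2 + 1)) -
        (r * (sm * (r * cu - 1) + m * s1 * (cu - r))) * (r * (m + 1) * (-su * (m - 1)))) -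
    s1 * ((r * (((-sm * m) * (r * cu - 1) + cm * (r * (-su * (m - 1)))) +
            ((m * -s1) * (cu - r) + (m * c1) * (-su * (m - 1))))) *
          (r * (m + 1) * cu - (m * r ^ 2 + 1)) -
        (r * (cm * (r * cu - 1) + m * c1 * (cu - r))) * (r * (m + 1) * (-su * (m - 1)))) =
    m * r ^ 2 * su ^ 2 * ((2 * m - 1) * r ^ 2 + 2 - m - r * (m + 1) * cu) := by
  linear_combination ((2)*m*r^2 + (-1)*m*r^4 + (-1)*m^2*r^2 + (2)*m^2*r^4 + (-1)*cu*m*r^3 + (-1)*cu*m^2*r^3 + (-2)*cu^2*m*r^2 + cu^2*m*r^4 + cu^2*m^2*r^2 + (-2)*cu^2*m^2*r^4 + cu^3*m*r^3 + cu^3*m^2*r^3) * h1 + ((-2)*m*r^2 + m*r^4 + m^2*r^2 + (-2)*m^2*r^4 + cu*m*r^3 + cu*m^2*r^3 + s1^2*m*r^2 + (-1)*s1^2*m*r^4 + (-1)*s1^2*m^2*r^2 + s1^2*m^2*r^4 + c1^2*m*r^2 + (-1)*c1^2*m*r^4 + (-1)*c1^2*m^2*r^2 + c1^2*m^2*r^4)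 * h2 + ((-1)*s1*su*m*r^2 + s1*su*m*r^4 + s1*su*m^2*r^2 + (-1)*s1*su*m^2*r^4 + c1*m*r + c1*m^2*r^3 + (-2)*c1*cu*m*r^2 + (-1)*c1*cu*m^2*r^2 + (-1)*c1*cu*m^2*r^4 + c1*cu^2*m*r^3 + c1*cu^2*m^2*r^3) * h3 + (s1*m*r + s1*m^2*r^3 + (-2)*s1*cu*m*r^2 + (-1)*s1*cu*m^2*r^2 + (-1)*s1*cu*m^2*r^4 + s1*cu^2*m*r^3 + s1*cu^2*m^2*r^3 + c1*su*m*r^2 + (-1)*c1*su*m*r^4 + (-1)*c1*su*m^2*r^2 + c1*su*m^2*r^4) * h4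

set_option maxHeartbeats 1000000 in
/-- For `|m| > 1` and `r > 1`, the set of cusp parameters of the two-circle
envelope in `[0, 2bπ)` is finite with exactly `2|a - b|` elements. -/
theorem two_circle_cusp_count_m_large
    (a b : ℤ) (hb : 0 < b) (hab : Int.gcd a b = 1)
    (m r : ℝ) (hm : m = (a : ℝ) / (b : ℝ))
    (hm1 : m ≠ -1) (hm0 : m ≠ 0) (hm2 : m ≠ 1)
    (hr : 1 < r) (hmgt : 1 < |m|)
    (D X Y : ℝ → ℝ)
    (hD : ∀ t, D t = r * (m + 1) * Real.cos ((m - 1) * t) - (m * r ^ 2 + 1))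
    (hX : ∀ t, X t = r * (Real.cos (m * t) * (r * Real.cos ((m - 1) * t) - 1) +
        m * Real.cos t * (Real.cos ((m - 1) * t) - r)) / D t)
    (hY : ∀ t, Y t = r * (Real.sin (m * t) * (r * Real.cos ((m - 1) * t) - 1) +
        m * Real.sin t * (Real.cos ((m - 1) * t) - r)) / D t) :
    ({t : ℝ | t ∈ Set.Ico (0 : ℝ) (2 * (b : ℝ) * π) ∧
        deriv X t = 0 ∧ deriv Y t = 0}).Finite ∧
    ({t : ℝ | t ∈ Set.Ico (0 : ℝ) (2 * (b : ℝ) * π) ∧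
        deriv X t = 0 ∧ deriv Y t = 0}).ncard = 2 * (a - b).natAbs := by
  have hbR : (0 : ℝ) < (b : ℝ) := by exact_mod_cast hb
  have hbne : (b : ℝ) ≠ 0 := ne_of_gt hbR
  have hrpos : (0 : ℝ) < r := lt_trans one_pos hr
  have hrne : r ≠ 0 := ne_of_gt hrpos
  have hmcase : 1 < m ∨ m < -1 := by
    rcases lt_abs.mp hmgt with h | h
    · exact Or.inl h
    · exact Or.inr (by linarith)
  have hXf : X = fun s => r * (Real.cos (m * s) * (r * Real.cos ((m - 1) * s) - 1) +
      m * Real.cos s * (Real.cos ((m - 1) * s) - r)) /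
      (r * (m + 1) * Real.cos ((m - 1) * s) - (m * r ^ 2 + 1)) :=
    funext fun s => by rw [hX s, hD s]
  have hYf : Y = fun s => r * (Real.sin (m * s) * (r * Real.cos ((m - 1) * s) - 1) +
      m * Real.sin s * (Real.cos ((m - 1) * s) - r)) /
      (r * (m + 1) * Real.cos ((m - 1) * s) - (m * r ^ 2 + 1)) :=
    funext fun s => by rw [hY s, hD s]
  have hDne : ∀ t : ℝ, r * (m + 1) * Real.cos ((m - 1) * t) - (m * r ^ 2 + 1) ≠ 0 := by
    intro t
    have hc1 := Real.cos_le_one ((m - 1) * t)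
    have hc2 := Real.neg_one_le_cos ((m - 1) * t)
    rcases hmcase with h | h
    · have h1 : (0 : ℝ) < (m * r - 1) * (r - 1) := by
        apply mul_pos
        · nlinarith [mul_pos (show (0:ℝ) < m - 1 by linarith) (show (0:ℝ) < r - 1 by linarith)]
        · linarith
      have h2 : (0 : ℝ) ≤ (1 - Real.cos ((m - 1) * t)) * (r * (m + 1)) := by
        apply mul_nonneg
        · linarith
        · nlinarith
      intro hc; nlinarith
    · have h1 : (0 : ℝ) < (1 - m * r) * (r - 1) := by
        apply mul_pos
        · nlinarith [mul_pos (show (0:ℝ) < -(m + 1) by linarith) hrpos]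
        · linarith
      have h2 : (0 : ℝ) ≤ (1 - Real.cos ((m - 1) * t)) * (-(r * (m + 1))) := by
        apply mul_nonneg
        · linarith
        · nlinarith [mul_pos (show (0:ℝ) < -(m + 1) by linarith) hrpos]
      intro hc; nlinarith
  have hiff : ∀ t : ℝ, (deriv X t = 0 ∧ deriv Y t = 0) ↔ Real.sin ((m - 1) * t) = 0 := by
    intro t
    have hF : (2 * m - 1) * r ^ 2 + 2 - m - r * (m + 1) * Real.cos ((m - 1) * t) ≠ 0 := by
      have hc1 := Real.cos_le_one ((m - 1) * t)
      have hc2 := Real.neg_one_le_cos ((m - 1) * t)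
      rcases hmcase with h | h
      · have h1 : (0 : ℝ) < (r - 1) * ((2 * m - 1) * r - (2 - m)) := by
          apply mul_pos
          · linarith
          · nlinarith [mul_pos (show (0:ℝ) < 2 * m - 1 by linarith)
              (show (0:ℝ) < r - 1 by linarith)]
        have h2 : (0 : ℝ) ≤ (1 - Real.cos ((m - 1) * t)) * (r * (m + 1)) := by
          apply mul_nonneg
          · linarith
          · nlinarith
        intro hc; nlinarith
      · have h1 : (0 : ℝ) < (r - 1) * ((2 - m) - (2 * m - 1) * r) := by
          apply mul_pos
          · linarith
          · nlinarith [mul_pos (show (0:ℝ) < 1 - 2 * m by linarith)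
              (show (0:ℝ) < r - 1 by linarith)]
        have h2 : (0 : ℝ) ≤ (1 - Real.cos ((m - 1) * t)) * (-(r * (m + 1))) := by
          apply mul_nonneg
          · linarith
          · nlinarith [mul_pos (show (0:ℝ) < -(m + 1) by linarith) hrpos]
        intro hc; nlinarith
    have hlin : HasDerivAt (fun s : ℝ => (m - 1) * s) (m - 1) t := by
      simpa using (hasDerivAt_id t).const_mul (m - 1)
    have hlinm : HasDerivAt (fun s : ℝ => m * s) m t := by
      simpa using (hasDerivAt_id t).const_mul m
    have hcu : HasDerivAt (fun s : ℝ => Real.cos ((m - 1) * s))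
        (-Real.sin ((m - 1) * t) * (m - 1)) t :=
      (Real.hasDerivAt_cos ((m - 1) * t)).comp t hlin
    have hcm : HasDerivAt (fun s : ℝ => Real.cos (m * s)) (-Real.sin (m * t) * m) t :=
      (Real.hasDerivAt_cos (m * t)).comp t hlinm
    have hsm : HasDerivAt (fun s : ℝ => Real.sin (m * s)) (Real.cos (m * t) * m) t :=
      (Real.hasDerivAt_sin (m * t)).comp t hlinm
    have hDen : HasDerivAt (fun s : ℝ => r * (m + 1) * Real.cos ((m - 1) * s) - (m * r ^ 2 + 1))
        (r * (m + 1) * (-Real.sin ((m - 1) * t) * (m - 1))) t :=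
      (hcu.const_mul (r * (m + 1))).sub_const (m * r ^ 2 + 1)
    have hNX : HasDerivAt (fun s : ℝ => r * (Real.cos (m * s) * (r * Real.cos ((m - 1) * s) - 1) +
        m * Real.cos s * (Real.cos ((m - 1) * s) - r)))
        (r * (((-Real.sin (m * t) * m) * (r * Real.cos ((m - 1) * t) - 1) +
            Real.cos (m * t) * (r * (-Real.sin ((m - 1) * t) * (m - 1)))) +
          ((m * -Real.sin t) * (Real.cos ((m - 1) * t) - r) +
            (m * Real.cos t) * (-Real.sin ((m - 1) * t) * (m - 1))))) t :=
      ((hcm.mul ((hcu.const_mul r).sub_const 1)).add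
        (((Real.hasDerivAt_cos t).const_mul m).mul (hcu.sub_const r))).const_mul r
    have hNY : HasDerivAt (fun s : ℝ => r * (Real.sin (m * s) * (r * Real.cos ((m - 1) * s) - 1) +
        m * Real.sin s * (Real.cos ((m - 1) * s) - r)))
        (r * (((Real.cos (m * t) * m) * (r * Real.cos ((m - 1) * t) - 1) +
            Real.sin (m * t) * (r * (-Real.sin ((m - 1) * t) * (m - 1)))) +
          ((m * Real.cos t) * (Real.cos ((m - 1) * t) - r) +
            (m * Real.sin t) * (-Real.sin ((m - 1) * t) * (m - 1))))) t :=
      ((hsm.mul ((hcu.const_mul r).sub_const 1)).add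
        (((Real.hasDerivAt_sin t).const_mul m).mul (hcu.sub_const r))).const_mul r
    have hdX : deriv X t =
        ((r * (((-Real.sin (m * t) * m) * (r * Real.cos ((m - 1) * t) - 1) +
            Real.cos (m * t) * (r * (-Real.sin ((m - 1) * t) * (m - 1)))) +
          ((m * -Real.sin t) * (Real.cos ((m - 1) * t) - r) +
            (m * Real.cos t) * (-Real.sin ((m - 1) * t) * (m - 1))))) *
          (r * (m + 1) * Real.cos ((m - 1) * t) - (m * r ^ 2 + 1)) -
          (r * (Real.cos (m * t) * (r * Real.cos ((m - 1) * t) - 1) +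
            m * Real.cos t * (Real.cos ((m - 1) * t) - r))) *
          (r * (m + 1) * (-Real.sin ((m - 1) * t) * (m - 1)))) /
          (r * (m + 1) * Real.cos ((m - 1) * t) - (m * r ^ 2 + 1)) ^ 2 := by
      rw [hXf]; exact (hNX.div hDen (hDne t)).deriv
    have hdY : deriv Y t =
        ((r * (((Real.cos (m * t) * m) * (r * Real.cos ((m - 1) * t) - 1) +
            Real.sin (m * t) * (r * (-Real.sin ((m - 1) * t) * (m - 1)))) +
          ((m * Real.cos t) * (Real.cos ((m - 1) * t) - r) +
            (m * Real.sin t) * (-Real.sin ((m - 1) * t) * (m - 1))))) *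
          (r * (m + 1) * Real.cos ((m - 1) * t) - (m * r ^ 2 + 1)) -
          (r * (Real.sin (m * t) * (r * Real.cos ((m - 1) * t) - 1) +
            m * Real.sin t * (Real.cos ((m - 1) * t) - r))) *
          (r * (m + 1) * (-Real.sin ((m - 1) * t) * (m - 1)))) /
          (r * (m + 1) * Real.cos ((m - 1) * t) - (m * r ^ 2 + 1)) ^ 2 := by
      rw [hYf]; exact (hNY.div hDen (hDne t)).deriv
    have hsq : (r * (m + 1) * Real.cos ((m - 1) * t) - (m * r ^ 2 + 1)) ^ 2 ≠ 0 :=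
      pow_ne_zero 2 (hDne t)
    have hcmadd : Real.cos (m * t) =
        Real.cos t * Real.cos ((m - 1) * t) - Real.sin t * Real.sin ((m - 1) * t) := by
      rw [show m * t = t + (m - 1) * t by ring, Real.cos_add]
    have hsmadd : Real.sin (m * t) =
        Real.sin t * Real.cos ((m - 1) * t) + Real.cos t * Real.sin ((m - 1) * t) := by
      rw [show m * t = t + (m - 1) * t by ring, Real.sin_add]
    constructor
    · rintro ⟨hx, hy⟩
      rw [hdX, div_eq_zero_iff] at hx
      rw [hdY, div_eq_zero_iff] at hy
      have hx0 := hx.resolve_right hsq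
      have hy0 := hy.resolve_right hsq
      have key := cuspAux1 m r (Real.cos t) (Real.sin t) (Real.cos (m * t)) (Real.sin (m * t))
        (Real.cos ((m - 1) * t)) (Real.sin ((m - 1) * t))
        (Real.sin_sq_add_cos_sq t) (Real.sin_sq_add_cos_sq ((m - 1) * t)) hcmadd hsmadd
      rw [hx0, hy0] at key
      have key2 : m * r ^ 2 * Real.sin ((m - 1) * t) ^ 2 *
          ((2 * m - 1) * r ^ 2 + 2 - m - r * (m + 1) * Real.cos ((m - 1) * t)) = 0 := by
        linear_combination -key
      have key3 := (mul_eq_zero.mp key2).resolve_right hF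
      have key4 := (mul_eq_zero.mp key3).resolve_left
        (mul_ne_zero hm0 (pow_ne_zero 2 hrne))
      exact (pow_eq_zero_iff two_ne_zero).mp key4
    · intro hsu
      have hpy := Real.sin_sq_add_cos_sq ((m - 1) * t)
      rw [hsu] at hpy
      have hcusq : (Real.cos ((m - 1) * t) - 1) * (Real.cos ((m - 1) * t) + 1) = 0 := by
        nlinarith
      have hcu1 : Real.cos ((m - 1) * t) = 1 ∨ Real.cos ((m - 1) * t) = -1 := by
        rcases mul_eq_zero.mp hcusq with h | h
        · exact Or.inl (by linarith)
        · exact Or.inr (by linarith)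
      constructor
      · rw [hdX, div_eq_zero_iff]
        left
        rw [hcmadd, hsmadd, hsu]
        rcases hcu1 with h | h <;> rw [h] <;> ring
      · rw [hdY, div_eq_zero_iff]
        left
        rw [hcmadd, hsmadd, hsu]
        rcases hcu1 with h | h <;> rw [h] <;> ring
  -- counting: the cusp set is { j * (π b / N) : 0 ≤ j < 2 N } where N = |a - b|
  have hdZ : a - b ≠ 0 := by
    intro h
    apply hm2
    rw [hm, show a = b by omega, div_self hbne]
  set N : ℕ := (a - b).natAbs with hNdef
  have hNpos : 0 < N := Int.natAbs_pos.mpr hdZ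
  have hNR : (0 : ℝ) < (N : ℝ) := by exact_mod_cast hNpos
  have hNne : ((N : ℝ)) ≠ 0 := ne_of_gt hNR
  have hpi := Real.pi_pos
  have hcpos : (0 : ℝ) < π * (b : ℝ) / (N : ℝ) := by positivity
  have hm1eq : m - 1 = ((a : ℝ) - (b : ℝ)) / (b : ℝ) := by
    rw [hm]; field_simp
  have hcast : ((a : ℝ) - (b : ℝ)) = (((a - b : ℤ) : ℝ)) := by push_cast; ring
  have habs : ((a : ℝ) - (b : ℝ)) = (N : ℝ) ∨ ((a : ℝ) - (b : ℝ)) = -(N : ℝ) := by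
    rcases Int.natAbs_eq (a - b) with h | h
    · left; rw [hcast, h, ← hNdef]; norm_cast
    · right; rw [hcast, h, ← hNdef]; push_cast; ring
  have hsin_iff : ∀ t : ℝ, Real.sin ((m - 1) * t) = 0 ↔
      Real.sin ((N : ℝ) / (b : ℝ) * t) = 0 := by
    intro t
    rcases habs with h | h
    · rw [hm1eq, h]
    · rw [hm1eq, h, show -(N : ℝ) / (b : ℝ) * t = -((N : ℝ) / (b : ℝ) * t) from by ring,
        Real.sin_neg, neg_eq_zero]
  have hc2N : (2 * (N : ℝ)) * (π * (b : ℝ) / (N : ℝ)) = 2 * (b : ℝ) * π := by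
    field_simp
  have hset : {t : ℝ | t ∈ Set.Ico (0 : ℝ) (2 * (b : ℝ) * π) ∧
      deriv X t = 0 ∧ deriv Y t = 0} =
      (fun j : ℕ => (j : ℝ) * (π * (b : ℝ) / (N : ℝ))) '' ↑(Finset.range (2 * N)) := by
    ext t
    simp only [Set.mem_setOf_eq, Set.mem_image, Finset.coe_range, Set.mem_Iio, Set.mem_Ico]
    rw [hiff t, hsin_iff t]
    constructor
    · rintro ⟨⟨ht0, ht2⟩, hs⟩
      obtain ⟨n, hn⟩ := Real.sin_eq_zero_iff.mp hs
      have htn : t = (n : ℝ) * (π * (b : ℝ) / (N : ℝ)) := by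
        rw [div_mul_eq_mul_div, eq_div_iff hbne] at hn
        rw [show (n : ℝ) * (π * (b : ℝ) / (N : ℝ)) = (n : ℝ) * π * (b : ℝ) / (N : ℝ) from by
          ring, eq_comm, div_eq_iff hNne]
        linear_combination hn
      have hn0 : (0 : ℝ) ≤ (n : ℝ) := by
        rw [htn] at ht0
        by_contra hcon
        push_neg at hcon
        nlinarith
      have hn2 : (n : ℝ) < 2 * (N : ℝ) := by
        rw [htn] at ht2
        by_contra hcon
        push_neg at hcon
        nlinarith [hc2N]
      have hn0' : 0 ≤ n := by exact_mod_cast hn0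
      have hn2' : n < 2 * (N : ℤ) := by exact_mod_cast hn2
      refine ⟨n.toNat, by omega, ?_⟩
      rw [htn]
      congr 1
      exact_mod_cast Int.toNat_of_nonneg hn0'
    · rintro ⟨j, hj, rfl⟩
      have hjR : (j : ℝ) < 2 * (N : ℝ) := by exact_mod_cast hj
      refine ⟨⟨by positivity, ?_⟩, ?_⟩
      · have := mul_lt_mul_of_pos_right hjR hcpos
        rw [hc2N] at this
        exact this
      · have harg : (N : ℝ) / (b : ℝ) * ((j : ℝ) * (π * (b : ℝ) / (N : ℝ))) = (j : ℝ) * π := by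
          field_simp
        rw [harg]
        exact Real.sin_nat_mul_pi j
  have hinj : Function.Injective (fun j : ℕ => (j : ℝ) * (π * (b : ℝ) / (N : ℝ))) := by
    intro x y hxy
    simp only at hxy
    exact_mod_cast mul_right_cancel₀ (ne_of_gt hcpos) hxy
  constructor
  · rw [hset]
    exact (Finset.range (2 * N)).finite_toSet.image _
  · rw [hset, Set.ncard_image_of_injective _ hinj, Set.ncard_coe_finset, Finset.card_range]
end

section
/- Suppose t is a parameter value of the two-circle envelope with D(t) ≠ 0 and sin((m−1)t) = 0 (a general cusp), and suppose in addition that the third t-derivative ∂³F/∂t³(t, X(t), Y(t)) = 0, i.e. the cusp is not simple. Then r attains the extreme value: if cos((m−1)t) = 1 then r = (2−m)/(2m−1), and if cos((m−1)t) = −1 then r = (m−2)/(2m−1). -/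
open Real

private lemma dsin' (c x : ℝ) :
    HasDerivAt (fun y : ℝ => Real.sin (c * y)) (Real.cos (c * x) * c) x := by
  simpa using ((hasDerivAt_id x).const_mul c).sin

private lemma dcos' (c x : ℝ) :
    HasDerivAt (fun y : ℝ => Real.cos (c * y)) (-Real.sin (c * x) * c) x := by
  simpa using ((hasDerivAt_id x).const_mul c).cos

private lemma iter3 (f : ℝ → ℝ) : iteratedDeriv 3 f = deriv (deriv (deriv f)) := by
  rw [iteratedDeriv_eq_iterate]
  rfl

/-- At a general cusp (`D(t) ≠ 0`, `sin((m-1)t) = 0`) of the two-circle envelope,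
if moreover the third `t`-derivative of `F` along the envelope vanishes (the cusp
is not simple), then `r` attains the extreme value: `r = (2-m)/(2m-1)` when
`cos((m-1)t) = 1`, and `r = (m-2)/(2m-1)` when `cos((m-1)t) = -1`. -/
theorem two_circle_nonsimple_general_cusp_forces_extreme_r
    (a b : ℤ) (hb : 0 < b) (hab : Int.gcd a b = 1)
    (m r : ℝ) (hm : m = (a : ℝ) / (b : ℝ))
    (hm1 : m ≠ -1) (hm0 : m ≠ 0) (hm2 : m ≠ 1) (hmh : m ≠ 1 / 2) (hm3 : m ≠ 2)
    (hr : 1 < r)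
    (A B C D X Y : ℝ → ℝ)
    (hA : ∀ t, A t = r * Real.sin (m * t) - Real.sin t)
    (hB : ∀ t, B t = -(r * Real.cos (m * t) - Real.cos t))
    (hC : ∀ t, C t = -(r * Real.sin ((m - 1) * t)))
    (hD : ∀ t, D t = r * (m + 1) * Real.cos ((m - 1) * t) - (m * r ^ 2 + 1))
    (hX : ∀ t, X t = r * (Real.cos (m * t) * (r * Real.cos ((m - 1) * t) - 1) +
        m * Real.cos t * (Real.cos ((m - 1) * t) - r)) / D t)
    (hY : ∀ t, Y t = r * (Real.sin (m * t) * (r * Real.cos ((m - 1) * t) - 1) +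
        m * Real.sin t * (Real.cos ((m - 1) * t) - r)) / D t)
    (t : ℝ) (hDt : D t ≠ 0) (hsin : Real.sin ((m - 1) * t) = 0)
    (h3 : iteratedDeriv 3 A t * X t + iteratedDeriv 3 B t * Y t +
        iteratedDeriv 3 C t = 0) :
    (Real.cos ((m - 1) * t) = 1 → r = (2 - m) / (2 * m - 1)) ∧
    (Real.cos ((m - 1) * t) = -1 → r = (m - 2) / (2 * m - 1)) := by
  have hr0 : r ≠ 0 := by positivity
  -- third derivative of A
  have eA0 : A = fun s => r * Real.sin (m * s) - Real.sin s := funext hA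
  have eA1 : deriv A = fun s => r * (Real.cos (m * s) * m) - Real.cos s := by
    funext s; rw [eA0]
    exact (((dsin' m s).const_mul r).sub (Real.hasDerivAt_sin s)).deriv
  have eA2 : deriv (deriv A) =
      fun s => r * (-Real.sin (m * s) * m * m) - (-Real.sin s) := by
    funext s; rw [eA1]
    exact ((((dcos' m s).mul_const m).const_mul r).sub (Real.hasDerivAt_cos s)).deriv
  have hA3 : iteratedDeriv 3 A t =
      r * (-(Real.cos (m * t) * m) * m * m) - (-Real.cos t) := by
    rw [iter3, eA2]
    exact (((((dsin' m t).neg.mul_const m).mul_const m).const_mul r).sub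
      (Real.hasDerivAt_sin t).neg).deriv
  -- third derivative of B
  have eB0 : B = fun s => -(r * Real.cos (m * s) - Real.cos s) := funext hB
  have eB1 : deriv B = fun s => -(r * (-Real.sin (m * s) * m) - (-Real.sin s)) := by
    funext s; rw [eB0]
    exact (((dcos' m s).const_mul r).sub (Real.hasDerivAt_cos s)).neg.deriv
  have eB2 : deriv (deriv B) =
      fun s => -(r * (-(Real.cos (m * s) * m) * m) - (-Real.cos s)) := by
    funext s; rw [eB1]
    exact ((((dsin' m s).neg.mul_const m).const_mul r).sub
      (Real.hasDerivAt_sin s).neg).neg.deriv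
  have hB3 : iteratedDeriv 3 B t =
      -(r * (-(-Real.sin (m * t) * m * m) * m) - (-(-Real.sin t))) := by
    rw [iter3, eB2]
    exact (((((dcos' m t).mul_const m).neg.mul_const m).const_mul r).sub
      (Real.hasDerivAt_cos t).neg).neg.deriv
  -- third derivative of C
  have eC0 : C = fun s => -(r * Real.sin ((m - 1) * s)) := funext hC
  have eC1 : deriv C = fun s => -(r * (Real.cos ((m - 1) * s) * (m - 1))) := by
    funext s; rw [eC0]
    exact ((dsin' (m - 1) s).const_mul r).neg.deriv
  have eC2 : deriv (deriv C) =
      fun s => -(r * (-Real.sin ((m - 1) * s) * (m - 1) * (m - 1))) := by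
    funext s; rw [eC1]
    exact (((dcos' (m - 1) s).mul_const (m - 1)).const_mul r).neg.deriv
  have hC3 : iteratedDeriv 3 C t =
      -(r * (-(Real.cos ((m - 1) * t) * (m - 1)) * (m - 1) * (m - 1))) := by
    rw [iter3, eC2]
    exact ((((dsin' (m - 1) t).neg.mul_const (m - 1)).mul_const (m - 1)).const_mul
      r).neg.deriv
  set c := Real.cos ((m - 1) * t) with hc
  have hc2 : c ^ 2 = 1 := by
    have h := Real.sin_sq_add_cos_sq ((m - 1) * t)
    rw [hsin] at h; nlinarith
  have hmcos : Real.cos (m * t) = c * Real.cos t := by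
    have hmt : m * t = (m - 1) * t + t := by ring
    rw [hmt, Real.cos_add, hsin]; ring
  have hmsin : Real.sin (m * t) = c * Real.sin t := by
    have hmt : m * t = (m - 1) * t + t := by ring
    rw [hmt, Real.sin_add, hsin]; ring
  set ct := Real.cos t
  set st := Real.sin t
  have pyth : st ^ 2 + ct ^ 2 = 1 := Real.sin_sq_add_cos_sq t
  -- the cleared equation
  rw [hA3, hB3, hC3, hX, hY, hD, hmcos, hmsin] at h3
  rw [hD] at hDt
  have hDt2 : r * c * (m + 1) - (r ^ 2 * m + 1) ≠ 0 := by intro h; apply hDt; linear_combination h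
  rw [← hc] at h3
  field_simp at h3
  have key' : r * (m * (m - 1) *
      (c * (2 * m - 1) * r ^ 2 - (m + 1) * r + c * (2 - m))) = 0 := by
    linear_combination h3 +
      (r * (-(1 - r * m ^ 3 * c) * (c * (r * c - 1) + m * (c - r)))) * pyth +
      (r * (r * m ^ 3 + r ^ 2 * m ^ 3 * c - 2 * r * m)) * hc2
  have hm1' : m - 1 ≠ 0 := sub_ne_zero.mpr hm2
  have quad : c * (2 * m - 1) * r ^ 2 - (m + 1) * r + c * (2 - m) = 0 := by
    have := mul_eq_zero.mp key'
    rcases this with h | h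
    · exact absurd h hr0
    · rcases mul_eq_zero.mp h with h' | h'
      · exact absurd (mul_eq_zero.mp h') (by push_neg; exact ⟨hm0, hm1'⟩)
      · exact h'
  have h2m1 : 2 * m - 1 ≠ 0 := fun h => hmh (by linarith)
  constructor
  · intro hc1
    rw [hc1] at quad
    have hfac : (r - 1) * ((2 * m - 1) * r - (2 - m)) = 0 := by
      linear_combination quad
    rcases mul_eq_zero.mp hfac with h | h
    · linarith [sub_ne_zero.mpr (ne_of_gt hr)]
    · field_simp
      linarith
  · intro hcm1
    rw [hcm1] at quad
    have hfac : (r + 1) * ((2 * m - 1) * r - (m - 2)) = 0 := by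
      linear_combination -quad
    rcases mul_eq_zero.mp hfac with h | h
    · linarith
    · rw [eq_div_iff h2m1]
      linarith
end

section
/- Suppose t is a parameter value of the two-circle envelope with D(t) ≠ 0 and sin((m−1)t) = 0, and suppose r takes the corresponding extreme value (r = (2−m)/(2m−1) if cos((m−1)t) = 1, r = (m−2)/(2m−1) if cos((m−1)t) = −1). Then the fourth t-derivative ∂⁴F/∂t⁴(t, X(t), Y(t)) = 0, so the singularity is of butterfly type (t⁴, t⁵), but the fifth t-derivative ∂⁵F/∂t⁵(t, X(t), Y(t)) ≠ 0. -/
open Real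

/-- Auxiliary family of trigonometric functions closed under differentiation. -/
noncomputable def G (k p q u v : ℝ) : ℝ → ℝ :=
  fun s => p * Real.sin (k * s) + q * Real.cos (k * s) + u * Real.sin s + v * Real.cos s

lemma hasDerivAtG (k p q u v s : ℝ) :
    HasDerivAt (G k p q u v) (G k (-(k * q)) (k * p) (-v) u s) s := by
  have h1 : HasDerivAt (fun x : ℝ => k * x) k s := by
    simpa using (hasDerivAt_id s).const_mul k
  have H := (((h1.sin.const_mul p).add (h1.cos.const_mul q)).add
      ((Real.hasDerivAt_sin s).const_mul u)).add ((Real.hasDerivAt_cos s).const_mul v)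
  refine HasDerivAt.congr_deriv H ?_
  simp only [G]; ring

lemma derivG (k p q u v : ℝ) :
    deriv (G k p q u v) = G k (-(k * q)) (k * p) (-v) u :=
  funext fun s => (hasDerivAtG k p q u v s).deriv

lemma iter4 (f : ℝ → ℝ) : iteratedDeriv 4 f = deriv (deriv (deriv (deriv f))) := by
  rw [show (4 : ℕ) = 3 + 1 from rfl, iteratedDeriv_succ,
    show (3 : ℕ) = 2 + 1 from rfl, iteratedDeriv_succ,
    show (2 : ℕ) = 1 + 1 from rfl, iteratedDeriv_succ, iteratedDeriv_one]

lemma iter5 (f : ℝ → ℝ) :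
    iteratedDeriv 5 f = deriv (deriv (deriv (deriv (deriv f)))) := by
  rw [show (5 : ℕ) = 4 + 1 from rfl, iteratedDeriv_succ, iter4]

lemma iterG4 (k p q u v : ℝ) :
    iteratedDeriv 4 (G k p q u v) = G k (k ^ 4 * p) (k ^ 4 * q) u v := by
  rw [iter4, derivG, derivG, derivG, derivG]
  funext s; simp only [G]; ring

lemma iterG5 (k p q u v : ℝ) :
    iteratedDeriv 5 (G k p q u v) = G k (-(k ^ 5 * q)) (k ^ 5 * p) (-v) u := by
  rw [iter5, derivG, derivG, derivG, derivG, derivG]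
  funext s; simp only [G]; ring

/-- At a general cusp (`D(t) ≠ 0`, `sin((m-1)t) = 0`) of the two-circle envelope
where `r` takes the corresponding extreme value, the fourth `t`-derivative of `F`
along the envelope also vanishes (the singularity is of butterfly type `(t⁴,t⁵)`),
but the fifth `t`-derivative does not vanish. -/
theorem two_circle_butterfly_at_extreme_r
    (a b : ℤ) (hb : 0 < b) (hab : Int.gcd a b = 1)
    (m r : ℝ) (hm : m = (a : ℝ) / (b : ℝ))
    (hm1 : m ≠ -1) (hm0 : m ≠ 0) (hm2 : m ≠ 1) (hmh : m ≠ 1 / 2) (hm3 : m ≠ 2)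
    (hr : 1 < r)
    (A B C D X Y : ℝ → ℝ)
    (hA : ∀ t, A t = r * Real.sin (m * t) - Real.sin t)
    (hB : ∀ t, B t = -(r * Real.cos (m * t) - Real.cos t))
    (hC : ∀ t, C t = -(r * Real.sin ((m - 1) * t)))
    (hD : ∀ t, D t = r * (m + 1) * Real.cos ((m - 1) * t) - (m * r ^ 2 + 1))
    (hX : ∀ t, X t = r * (Real.cos (m * t) * (r * Real.cos ((m - 1) * t) - 1) +
        m * Real.cos t * (Real.cos ((m - 1) * t) - r)) / D t)
    (hY : ∀ t, Y t = r * (Real.sin (m * t) * (r * Real.cos ((m - 1) * t) - 1) +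
        m * Real.sin t * (Real.cos ((m - 1) * t) - r)) / D t)
    (t : ℝ) (hDt : D t ≠ 0) (hsin : Real.sin ((m - 1) * t) = 0)
    (hext : (Real.cos ((m - 1) * t) = 1 ∧ r = (2 - m) / (2 * m - 1)) ∨
            (Real.cos ((m - 1) * t) = -1 ∧ r = (m - 2) / (2 * m - 1))) :
    (iteratedDeriv 4 A t * X t + iteratedDeriv 4 B t * Y t +
        iteratedDeriv 4 C t = 0) ∧
    (iteratedDeriv 5 A t * X t + iteratedDeriv 5 B t * Y t +
        iteratedDeriv 5 C t ≠ 0) := by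
  have hA' : A = G m r 0 (-1) 0 := funext fun s => by rw [hA s]; simp only [G]; ring
  have hB' : B = G m 0 (-r) 0 1 := funext fun s => by rw [hB s]; simp only [G]; ring
  have hC' : C = G (m - 1) (-r) 0 0 0 := funext fun s => by
    rw [hC s]; simp only [G]; ring
  have i4A : iteratedDeriv 4 A t = m ^ 4 * r * Real.sin (m * t) - Real.sin t := by
    rw [hA', iterG4]; simp only [G]; ring
  have i4B : iteratedDeriv 4 B t = -(m ^ 4 * r * Real.cos (m * t)) + Real.cos t := by
    rw [hB', iterG4]; simp only [G]; ring
  have i4C : iteratedDeriv 4 C t = -((m - 1) ^ 4 * r * Real.sin ((m - 1) * t)) := by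
    rw [hC', iterG4]; simp only [G]; ring
  have i5A : iteratedDeriv 5 A t = m ^ 5 * r * Real.cos (m * t) - Real.cos t := by
    rw [hA', iterG5]; simp only [G]; ring
  have i5B : iteratedDeriv 5 B t = m ^ 5 * r * Real.sin (m * t) - Real.sin t := by
    rw [hB', iterG5]; simp only [G]; ring
  have i5C : iteratedDeriv 5 C t = -((m - 1) ^ 5 * r * Real.cos ((m - 1) * t)) := by
    rw [hC', iterG5]; simp only [G]; ring
  have hmt : m * t = (m - 1) * t + t := by ring
  have pyth : Real.sin t ^ 2 + Real.cos t ^ 2 = 1 := Real.sin_sq_add_cos_sq t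
  have h2m : (2 * m - 1) ≠ 0 := fun h => hmh (by linarith)
  have hm2' : (2 - m) ≠ 0 := fun h => hm3 (by linarith)
  have hm1' : (m - 1) ≠ 0 := sub_ne_zero.mpr hm2
  have hp1 : (m + 1) ≠ 0 := fun h => hm1 (by linarith)
  have hval : 3 * m * (2 - m) ^ 2 * (m - 1) ^ 3 * (m + 1) / (2 * m - 1) ^ 2 ≠ 0 := by
    apply div_ne_zero
    · exact mul_ne_zero (mul_ne_zero (mul_ne_zero (mul_ne_zero three_ne_zero hm0)
        (pow_ne_zero _ hm2')) (pow_ne_zero _ hm1')) hp1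
    · exact pow_ne_zero _ h2m
  rcases hext with ⟨hcos, hrv⟩ | ⟨hcos, hrv⟩
  · -- cos((m-1)t) = 1
    have hsmt : Real.sin (m * t) = Real.sin t := by
      rw [hmt, Real.sin_add, hsin, hcos]; ring
    have hcmt : Real.cos (m * t) = Real.cos t := by
      rw [hmt, Real.cos_add, hsin, hcos]; ring
    have hXD : X t * D t = r * (1 - m) * (r - 1) * Real.cos t := by
      rw [hX, div_mul_cancel₀ _ hDt, hcmt, hcos]; ring
    have hYD : Y t * D t = r * (1 - m) * (r - 1) * Real.sin t := by
      rw [hY, div_mul_cancel₀ _ hDt, hsmt, hcos]; ring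
    have hDv : D t = -((r - 1) * (m * r - 1)) := by rw [hD t, hcos]; ring
    constructor
    · have g1 : (iteratedDeriv 4 A t * X t + iteratedDeriv 4 B t * Y t +
          iteratedDeriv 4 C t) * D t = 0 := by
        calc (iteratedDeriv 4 A t * X t + iteratedDeriv 4 B t * Y t +
              iteratedDeriv 4 C t) * D t
            = iteratedDeriv 4 A t * (X t * D t) + iteratedDeriv 4 B t * (Y t * D t) +
              iteratedDeriv 4 C t * D t := by ring
          _ = 0 := by rw [hXD, hYD, i4A, i4B, i4C, hsmt, hcmt, hsin]; ring
      exact (mul_eq_zero.mp g1).resolve_right hDt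
    · have g5 : (iteratedDeriv 5 A t * X t + iteratedDeriv 5 B t * Y t +
          iteratedDeriv 5 C t) * D t
          = 3 * m * (2 - m) ^ 2 * (m - 1) ^ 3 * (m + 1) / (2 * m - 1) ^ 2 := by
        have step : (iteratedDeriv 5 A t * X t + iteratedDeriv 5 B t * Y t +
            iteratedDeriv 5 C t) * D t
            = (m ^ 5 * r - 1) * (r * (1 - m) * (r - 1)) *
                (Real.sin t ^ 2 + Real.cos t ^ 2) +
              (m - 1) ^ 5 * r * ((r - 1) * (m * r - 1)) := by
          calc (iteratedDeriv 5 A t * X t + iteratedDeriv 5 B t * Y t +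
                iteratedDeriv 5 C t) * D t
              = iteratedDeriv 5 A t * (X t * D t) + iteratedDeriv 5 B t * (Y t * D t) +
                iteratedDeriv 5 C t * D t := by ring
            _ = _ := by rw [hXD, hYD, hDv, i5A, i5B, i5C, hsmt, hcmt, hcos]; ring
        rw [step, pyth, hrv]
        have h2m'' : m * 2 - 1 ≠ 0 := by rw [mul_comm]; exact h2m
        field_simp
        ring
      intro hE
      rw [hE, zero_mul] at g5
      exact hval g5.symm
  · -- cos((m-1)t) = -1
    have hsmt : Real.sin (m * t) = -Real.sin t := by
      rw [hmt, Real.sin_add, hsin, hcos]; ring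
    have hcmt : Real.cos (m * t) = -Real.cos t := by
      rw [hmt, Real.cos_add, hsin, hcos]; ring
    have hXD : X t * D t = r * (1 - m) * (r + 1) * Real.cos t := by
      rw [hX, div_mul_cancel₀ _ hDt, hcmt, hcos]; ring
    have hYD : Y t * D t = r * (1 - m) * (r + 1) * Real.sin t := by
      rw [hY, div_mul_cancel₀ _ hDt, hsmt, hcos]; ring
    have hDv : D t = -((r + 1) * (m * r + 1)) := by rw [hD t, hcos]; ring
    constructor
    · have g1 : (iteratedDeriv 4 A t * X t + iteratedDeriv 4 B t * Y t +
          iteratedDeriv 4 C t) * D t = 0 := by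
        calc (iteratedDeriv 4 A t * X t + iteratedDeriv 4 B t * Y t +
              iteratedDeriv 4 C t) * D t
            = iteratedDeriv 4 A t * (X t * D t) + iteratedDeriv 4 B t * (Y t * D t) +
              iteratedDeriv 4 C t * D t := by ring
          _ = 0 := by rw [hXD, hYD, i4A, i4B, i4C, hsmt, hcmt, hsin]; ring
      exact (mul_eq_zero.mp g1).resolve_right hDt
    · have g5 : (iteratedDeriv 5 A t * X t + iteratedDeriv 5 B t * Y t +
          iteratedDeriv 5 C t) * D t
          = 3 * m * (2 - m) ^ 2 * (m - 1) ^ 3 * (m + 1) / (2 * m - 1) ^ 2 := by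
        have step : (iteratedDeriv 5 A t * X t + iteratedDeriv 5 B t * Y t +
            iteratedDeriv 5 C t) * D t
            = (-(m ^ 5 * r) - 1) * (r * (1 - m) * (r + 1)) *
                (Real.sin t ^ 2 + Real.cos t ^ 2) -
              (m - 1) ^ 5 * r * ((r + 1) * (m * r + 1)) := by
          calc (iteratedDeriv 5 A t * X t + iteratedDeriv 5 B t * Y t +
                iteratedDeriv 5 C t) * D t
              = iteratedDeriv 5 A t * (X t * D t) + iteratedDeriv 5 B t * (Y t * D t) +
                iteratedDeriv 5 C t * D t := by ring
            _ = _ := by rw [hXD, hYD, hDv, i5A, i5B, i5C, hsmt, hcmt, hcos]; ring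
        rw [step, pyth, hrv]
        have h2m'' : m * 2 - 1 ≠ 0 := by rw [mul_comm]; exact h2m
        field_simp
        ring
      intro hE
      rw [hE, zero_mul] at g5
      exact hval g5.symm
end
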